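/- arXiv:1409.4274 — 3 statements merged into one kernel-verified Lean document; each statement's English description precedes it below -/
import Mathlib

section
/- Let 𝒩 ⊆ 𝒩₁¹ be a locally uniformly ψ₁-integrating set with m_μ > 1 for all μ ∈ 𝒩. Then for every μ₁ ∈ 𝒩 there exist p > 0 and δ > 0 such that for all μ₂ ∈ 𝒩 with d_TV(μ₁,μ₂) ≤ δ one has q_{μ₂} ≤ 1 − p and f_{μ₂}'(q_{μ₂}) ≤ 1 − p. -/
open MeasureTheory ProbabilityTheory ENNReal Metric

noncomputable section

/-- The canonical sample space of the Galton–Watson process: one ℕ₀-valued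
coordinate `X_{k,i} = ω (k, i)` for each generation `k` and individual `i`. -/
abbrev GWOmega : Type := (ℕ × ℕ) → ℕ

/-- Generation sizes of the Galton–Watson process: `Z 0 = 1` and
`Z (n+1) ω = ∑_{i < Z n ω} X_{n,i}(ω)`. -/
def Z : ℕ → GWOmega → ℕ
  | 0, _ => 1
  | n + 1, ω => ∑ i ∈ Finset.range (Z n ω), ω (n, i)

/-- The Lotka–Nagaev estimator `m̂_n = Z_n / Z_{n-1}`, with value `0`
if `Z_{n-1} = 0` (division by `0` in `ℝ≥0` yields `0`). -/
def mhat (n : ℕ) (ω : GWOmega) : NNReal := (Z n ω : NNReal) / (Z (n - 1) ω : NNReal)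

/-- `IsGWMeasure P μ` says that `P` is the product measure `ℙ^μ = μ^{⊗(ℕ₀×ℕ)}`:
a probability measure under which the coordinates are i.i.d. with law `μ`. -/
def IsGWMeasure (P : Measure GWOmega) (μ : PMF ℕ) : Prop :=
  IsProbabilityMeasure P ∧
    iIndepFun (fun ki : ℕ × ℕ => fun ω : GWOmega => ω ki) P ∧
    ∀ ki : ℕ × ℕ, P.map (fun ω => ω ki) = μ.toMeasure

/-- The mean `m_μ = ∑_k k·μ{k}`, as an extended nonnegative real. -/
def mMean (μ : PMF ℕ) : ℝ≥0∞ := ∑' k : ℕ, (k : ℝ≥0∞) * μ k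

/-- The mean `m_μ` as a real number. -/
def mReal (μ : PMF ℕ) : ℝ := (mMean μ).toReal

/-- The set `𝒩₁¹` of all offspring laws on `ℕ₀` with finite mean. -/
def N11 : Set (PMF ℕ) := {μ | mMean μ < ⊤}

/-- Total variation distance `d_TV(μ₁,μ₂) = (1/2)∑_k |μ₁{k} - μ₂{k}|` on laws on `ℕ₀`. -/
def dTV (μ₁ μ₂ : PMF ℕ) : ℝ := (1 / 2) * ∑' k : ℕ, |(μ₁ k).toReal - (μ₂ k).toReal|

/-- The tail mean `∑_{k ≥ ℓ} k·μ{k}`. -/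
def tailMean (μ : PMF ℕ) (ℓ : ℕ) : ℝ≥0∞ :=
  ∑' k : ℕ, if ℓ ≤ k then (k : ℝ≥0∞) * μ k else 0

/-- `𝒩` is locally uniformly ψ₁-integrating. -/
def LocUnifIntegrating (N : Set (PMF ℕ)) : Prop :=
  ∀ ε > (0 : ℝ), ∀ μ₁ ∈ N, ∃ δ > (0 : ℝ), ∃ ℓ : ℕ,
    ∀ μ₂ ∈ N, dTV μ₁ μ₂ ≤ δ → tailMean μ₂ ℓ ≤ ENNReal.ofReal ε

/-- `𝒩` is uniformly ψ₁-integrating. -/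
def UnifIntegrating (N : Set (PMF ℕ)) : Prop :=
  ∀ ε > (0 : ℝ), ∃ ℓ : ℕ, ∀ μ ∈ N, tailMean μ ℓ ≤ ENNReal.ofReal ε

/-- The Prohorov distance between two (probability) measures on `ℝ₊ = ℝ≥0`:
`ρ(ν₁,ν₂) = inf{ε > 0 : ν₁[A] ≤ ν₂[A^ε] + ε for all Borel A}`. -/
def prohorov (ν₁ ν₂ : Measure NNReal) : ℝ :=
  sInf {ε : ℝ | 0 < ε ∧ ∀ A : Set NNReal, MeasurableSet A →
    ν₁ A ≤ ν₂ (Metric.cthickening ε A) + ENNReal.ofReal ε}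

/-- The law of the Lotka–Nagaev estimator `m̂_n` under `P`, as a measure on `ℝ₊`. -/
def lawMhat (P : Measure GWOmega) (n : ℕ) : Measure NNReal := P.map (mhat n)

/-- Conditional probability `P[B | A] = P(B ∩ A)/P(A)`. -/
def condProb (P : Measure GWOmega) (B A : Set GWOmega) : ℝ≥0∞ := P (B ∩ A) / P A

/-- The extinction probability `q_μ = ℙ^μ[Z_n = 0 for some n]`. -/
def extinctProb (P : Measure GWOmega) : ℝ := (P {ω | ∃ n, Z n ω = 0}).toReal

/-- The derivative `f_μ'(s) = ∑_k k·s^{k-1}·μ{k}` of the generating function of `μ`. -/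
def fgenDeriv (μ : PMF ℕ) (s : ℝ) : ℝ := ∑' k : ℕ, (k : ℝ) * s ^ (k - 1) * (μ k).toReal

/-- Total variation distance between two measures on a discrete space
(used for laws on `ℕ₀ⁿ`). -/
def dTVmeas {α : Type*} [MeasurableSpace α] (ν₁ ν₂ : Measure α) : ℝ :=
  (1 / 2) * ∑' x : α, |(ν₁ {x}).toReal - (ν₂ {x}).toReal|

end

open MeasureTheory ProbabilityTheory ENNReal Metric MeasurableSpace

noncomputable section Aux

/-- generating function in `ℝ≥0∞`. -/
def fE (μ : PMF ℕ) (s : ℝ≥0∞) : ℝ≥0∞ := ∑' k : ℕ, s ^ k * μ k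

/-- σ-algebra generated by a set of coordinates. -/
def coordSA (S : Set (ℕ × ℕ)) : MeasurableSpace GWOmega :=
  ⨆ j ∈ S, MeasurableSpace.comap (fun ω : GWOmega => ω j) inferInstance

lemma coordSA_le (S : Set (ℕ × ℕ)) : coordSA S ≤ (inferInstance : MeasurableSpace GWOmega) := by
  refine iSup_le fun j => iSup_le fun _ => ?_
  exact (measurable_pi_apply j).comap_le

lemma measurable_coord_coordSA {S : Set (ℕ × ℕ)} {j : ℕ × ℕ} (hj : j ∈ S) :
    Measurable[coordSA S] (fun ω : GWOmega => ω j) := by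
  have h1 : MeasurableSpace.comap (fun ω : GWOmega => ω j) inferInstance ≤ coordSA S := by
    exact le_iSup₂ (f := fun j _ => MeasurableSpace.comap (fun ω : GWOmega => ω j) inferInstance) j hj
  exact (Measurable.of_comap_le le_rfl).mono h1 le_rfl

lemma coordSA_mono {S T : Set (ℕ × ℕ)} (h : S ⊆ T) : coordSA S ≤ coordSA T := by
  refine iSup_le fun j => iSup_le fun hj => ?_
  exact le_iSup₂ (f := fun j _ => MeasurableSpace.comap (fun ω : GWOmega => ω j) inferInstance) j (h hj)

/-- generations strictly below `n`. -/
def gens (n : ℕ) : Set (ℕ × ℕ) := {j | j.1 < n}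

lemma measurable_Z_coordSA (n : ℕ) : Measurable[coordSA (gens n)] (Z n) := by
  induction n with
  | zero => exact @measurable_const _ _ _ (coordSA (gens 0)) 1
  | succ n ih =>
    letI m := coordSA (gens (n+1))
    have hm : coordSA (gens n) ≤ m := coordSA_mono (fun j hj => Nat.lt_succ_of_lt hj)
    refine measurable_to_countable' (fun y => ?_)
    have : Z (n+1) ⁻¹' {y} =
        ⋃ k : ℕ, (Z n ⁻¹' {k}) ∩ {ω : GWOmega | ∑ i ∈ Finset.range k, ω (n, i) = y} := by
      ext ω
      simp only [Set.mem_preimage, Set.mem_singleton_iff, Set.mem_iUnion, Set.mem_inter_iff,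
        Set.mem_setOf_eq]
      constructor
      · intro h; exact ⟨Z n ω, rfl, h⟩
      · rintro ⟨k, hk, hsum⟩; show Z (n+1) ω = y; simp only [Z]; rw [hk]; exact hsum
    rw [this]
    refine MeasurableSet.iUnion fun k => MeasurableSet.inter ?_ ?_
    · exact hm _ (ih (measurableSet_singleton k))
    · have hsum : Measurable[m] (fun ω : GWOmega => ∑ i ∈ Finset.range k, ω (n, i)) := by
        refine Finset.measurable_sum _ (fun i _ => ?_)
        exact measurable_coord_coordSA (S := gens (n+1)) (Nat.lt_succ_self n)
      exact hsum (measurableSet_singleton y)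

lemma measurable_Z (n : ℕ) : Measurable (Z n) :=
  (measurable_Z_coordSA n).mono (coordSA_le _) le_rfl

end Aux
noncomputable section Aux2
open MeasureTheory ProbabilityTheory ENNReal MeasurableSpace

variable {μ : PMF ℕ} {P : Measure GWOmega}

lemma indep_coordSA (hP : IsGWMeasure P μ) {S T : Set (ℕ × ℕ)} (hST : Disjoint S T) :
    Indep (coordSA S) (coordSA T) P := by
  have h := (hP.2.1).iIndep
  exact indep_iSup_of_disjoint (fun j => (measurable_pi_apply j).comap_le) h hST

lemma lintegral_coord (hP : IsGWMeasure P μ) (j : ℕ × ℕ) (g : ℕ → ℝ≥0∞) :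
    ∫⁻ ω, g (ω j) ∂P = ∑' k : ℕ, g k * μ k := by
  have hmap := hP.2.2 j
  rw [← lintegral_map (f := g) (measurable_of_countable g) (measurable_pi_apply j), hmap,
    lintegral_countable' g]
  congr 1
  ext k
  rw [PMF.toMeasure_apply_singleton _ _ (measurableSet_singleton k)]

/-- key product identity -/
lemma lintegral_indicator_prod (hP : IsGWMeasure P μ) (n : ℕ) (s : ℝ≥0∞)
    {A : Set GWOmega} (hA : MeasurableSet[coordSA (gens n)] A) (k : ℕ) :
    ∫⁻ ω, A.indicator (fun _ => (1:ℝ≥0∞)) ω * ∏ i ∈ Finset.range k, s ^ ω (n, i) ∂P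
      = P A * (fE μ s) ^ k := by
  induction k with
  | zero =>
    simp only [Finset.range_zero, Finset.prod_empty, mul_one, pow_zero]
    rw [lintegral_indicator ((coordSA_le _) _ hA)]
    simp
  | succ k ih =>
    have hdisj : Disjoint (gens n ∪ {j : ℕ × ℕ | j.1 = n ∧ j.2 < k}) {(n, k)} := by
      simp only [Set.disjoint_singleton_right, Set.mem_union, gens, Set.mem_setOf_eq]
      push_neg
      exact ⟨le_refl n, fun _ => le_refl k⟩
    have hindep := indep_coordSA hP hdisj
    have hXmeas : Measurable[coordSA (gens n ∪ {j : ℕ × ℕ | j.1 = n ∧ j.2 < k})]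
        (fun ω => A.indicator (fun _ => (1:ℝ≥0∞)) ω * ∏ i ∈ Finset.range k, s ^ ω (n, i)) := by
      apply Measurable.mul
      · exact (measurable_const (a := (1:ℝ≥0∞))).indicator
          ((coordSA_mono Set.subset_union_left) _ hA)
      · apply Finset.measurable_prod
        intro i hi
        have : Measurable[coordSA (gens n ∪ {j : ℕ × ℕ | j.1 = n ∧ j.2 < k})]
            (fun ω : GWOmega => ω (n, i)) :=
          measurable_coord_coordSA (Or.inr ⟨rfl, Finset.mem_range.mp hi⟩)
        exact Measurable.pow measurable_const this
    have hYmeas : Measurable[coordSA ({(n, k)} : Set (ℕ × ℕ))]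
        (fun ω : GWOmega => s ^ ω (n, k)) :=
      Measurable.pow measurable_const (measurable_coord_coordSA rfl)
    calc ∫⁻ ω, A.indicator (fun _ => (1:ℝ≥0∞)) ω
            * ∏ i ∈ Finset.range (k+1), s ^ ω (n, i) ∂P
        = ∫⁻ ω, (A.indicator (fun _ => (1:ℝ≥0∞)) ω * ∏ i ∈ Finset.range k, s ^ ω (n, i))
            * s ^ ω (n, k) ∂P := by
          congr 1; ext ω; rw [Finset.prod_range_succ]; ring
      _ = (∫⁻ ω, A.indicator (fun _ => (1:ℝ≥0∞)) ω * ∏ i ∈ Finset.range k, s ^ ω (n, i) ∂P)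
            * ∫⁻ ω, s ^ ω (n, k) ∂P :=
          lintegral_mul_eq_lintegral_mul_lintegral_of_independent_measurableSpace
            (coordSA_le _) (coordSA_le _) hindep hXmeas hYmeas
      _ = P A * (fE μ s) ^ k * fE μ s := by
          rw [ih, lintegral_coord hP (n, k) (fun m => s ^ m)]; rfl
      _ = P A * (fE μ s) ^ (k + 1) := by ring
end Aux2
noncomputable section Aux3
open MeasureTheory ProbabilityTheory ENNReal MeasurableSpace

variable {μ : PMF ℕ} {P : Measure GWOmega}

lemma lintegral_indicator_const (hP : IsGWMeasure P μ) {A : Set GWOmega}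
    (hA : MeasurableSet A) (c : ℝ≥0∞) :
    ∫⁻ ω, A.indicator (fun _ => (1:ℝ≥0∞)) ω * c ∂P = P A * c := by
  have : ∀ ω, A.indicator (fun _ => (1:ℝ≥0∞)) ω * c = A.indicator (fun _ => c) ω := by
    intro ω
    by_cases h : ω ∈ A <;> simp [h]
  simp_rw [this]
  rw [lintegral_indicator hA]
  simp [mul_comm]

lemma lintegral_partition (hP : IsGWMeasure P μ) (n : ℕ) {f : GWOmega → ℝ≥0∞}
    (hf : Measurable f) :
    ∫⁻ ω, f ω ∂P
      = ∑' k : ℕ, ∫⁻ ω, ({ω' : GWOmega | Z n ω' = k}).indicator (fun _ => (1:ℝ≥0∞)) ω * f ω ∂P := by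
  rw [← lintegral_tsum]
  · congr 1
    ext ω
    rw [eq_comm]
    rw [tsum_eq_single (Z n ω) (fun k hk => by
      rw [Set.indicator_of_notMem (by simpa using (Ne.symm hk)), zero_mul])]
    rw [Set.indicator_of_mem (by simp), one_mul]
  · intro k
    exact ((measurable_const.indicator (measurable_Z n (measurableSet_singleton k))).mul hf).aemeasurable

lemma H_succ (hP : IsGWMeasure P μ) (n : ℕ) (s : ℝ≥0∞) :
    ∫⁻ ω, s ^ Z (n+1) ω ∂P = ∫⁻ ω, (fE μ s) ^ Z n ω ∂P := by
  have hZmeas : ∀ m k, MeasurableSet {ω : GWOmega | Z m ω = k} :=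
    fun m k => measurable_Z m (measurableSet_singleton k)
  have hmeas1 : Measurable (fun ω => s ^ Z (n+1) ω) :=
    Measurable.pow measurable_const (measurable_Z (n+1))
  have hmeas2 : Measurable (fun ω => (fE μ s) ^ Z n ω) :=
    Measurable.pow measurable_const (measurable_Z n)
  rw [lintegral_partition hP n hmeas1, lintegral_partition hP n hmeas2]
  congr 1
  ext k
  have h1 : ∀ ω : GWOmega,
      ({ω' : GWOmega | Z n ω' = k}).indicator (fun _ => (1:ℝ≥0∞)) ω * s ^ Z (n+1) ω
      = ({ω' : GWOmega | Z n ω' = k}).indicator (fun _ => (1:ℝ≥0∞)) ω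
          * ∏ i ∈ Finset.range k, s ^ ω (n, i) := by
    intro ω
    by_cases h : Z n ω = k
    · have : Z (n+1) ω = ∑ i ∈ Finset.range k, ω (n, i) := by
        simp only [Z]; rw [h]
      rw [this, ← Finset.prod_pow_eq_pow_sum]
    · simp [Set.indicator_of_notMem, h]
  have h2 : ∀ ω : GWOmega,
      ({ω' : GWOmega | Z n ω' = k}).indicator (fun _ => (1:ℝ≥0∞)) ω * (fE μ s) ^ Z n ω
      = ({ω' : GWOmega | Z n ω' = k}).indicator (fun _ => (1:ℝ≥0∞)) ω * (fE μ s) ^ k := by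
    intro ω
    by_cases h : Z n ω = k
    · rw [h]
    · simp [Set.indicator_of_notMem, h]
  simp_rw [h1, h2]
  have hAmeas : MeasurableSet[coordSA (gens n)] {ω' : GWOmega | Z n ω' = k} :=
    measurable_Z_coordSA n (measurableSet_singleton k)
  rw [lintegral_indicator_prod hP n s hAmeas k, lintegral_indicator_const hP (hZmeas n k)]

lemma H_iterate (hP : IsGWMeasure P μ) (n : ℕ) (s : ℝ≥0∞) :
    ∫⁻ ω, s ^ Z n ω ∂P = (fE μ)^[n] s := by
  induction n generalizing s with
  | zero =>
    have : IsProbabilityMeasure P := hP.1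
    simp [Z, lintegral_const]
  | succ n ih =>
    rw [H_succ hP n s, ih (fE μ s), Function.iterate_succ_apply]

lemma measZ_eq (hP : IsGWMeasure P μ) (n : ℕ) :
    P {ω : GWOmega | Z n ω = 0} = (fE μ)^[n] 0 := by
  rw [← H_iterate hP n 0]
  have : ∀ ω : GWOmega, (0:ℝ≥0∞) ^ Z n ω
      = ({ω' : GWOmega | Z n ω' = 0}).indicator (fun _ => (1:ℝ≥0∞)) ω := by
    intro ω
    by_cases h : Z n ω = 0
    · rw [Set.indicator_of_mem (by simpa using h), h, pow_zero]
    · rw [Set.indicator_of_notMem (by simpa using h), zero_pow h]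
  rw [show (fun ω : GWOmega => _) = _ from rfl]
  simp_rw [this]
  rw [lintegral_indicator
    (show MeasurableSet {ω : GWOmega | Z n ω = 0} from measurable_Z n (measurableSet_singleton 0))]
  simp

lemma ext_eq (hP : IsGWMeasure P μ) :
    P {ω : GWOmega | ∃ n, Z n ω = 0} = ⨆ n, (fE μ)^[n] 0 := by
  have hmono : Monotone (fun n => {ω : GWOmega | Z n ω = 0}) := by
    intro a b hab
    induction b with
    | zero => simp at hab; subst hab; exact le_rfl
    | succ b ihb =>
      rcases Nat.lt_or_ge a (b+1) with h | h
      · refine le_trans (ihb (Nat.lt_succ_iff.mp h)) ?_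
        intro ω hω
        simp only [Set.mem_setOf_eq] at hω ⊢
        simp [Z, hω]
      · have : a = b + 1 := le_antisymm hab h
        subst this; exact le_rfl
  have : {ω : GWOmega | ∃ n, Z n ω = 0} = ⋃ n, {ω : GWOmega | Z n ω = 0} := by
    ext ω; simp
  rw [this, (hmono.directed_le).measure_iUnion]
  simp_rw [measZ_eq hP]
end Aux3
noncomputable section Aux4
open MeasureTheory ProbabilityTheory ENNReal

/-- real generating function -/
def fR (μ : PMF ℕ) (s : ℝ) : ℝ := ∑' k : ℕ, (μ k).toReal * s ^ k

variable {μ : PMF ℕ}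

lemma pmf_ne_top (k : ℕ) : μ k ≠ ∞ :=
  ne_top_of_le_ne_top μ.tsum_coe_ne_top (ENNReal.le_tsum k)

lemma summable_pmf : Summable (fun k => (μ k).toReal) :=
  ENNReal.summable_toReal μ.tsum_coe_ne_top

lemma tsum_pmf : ∑' k : ℕ, (μ k).toReal = 1 := by
  rw [← ENNReal.tsum_toReal_eq (fun k => pmf_ne_top k), μ.tsum_coe]
  simp

lemma pmf_nonneg (k : ℕ) : (0:ℝ) ≤ (μ k).toReal := ENNReal.toReal_nonneg

lemma summable_fR {s : ℝ} (h0 : 0 ≤ s) (h1 : s ≤ 1) :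
    Summable (fun k : ℕ => (μ k).toReal * s ^ k) := by
  refine Summable.of_nonneg_of_le (fun k => by positivity) (fun k => ?_)
    (summable_pmf (μ := μ))
  have h2 : s ^ k ≤ 1 := pow_le_one₀ h0 h1
  nlinarith [pmf_nonneg (μ := μ) k]

lemma fE_ofReal {s : ℝ} (h0 : 0 ≤ s) (h1 : s ≤ 1) :
    fE μ (ENNReal.ofReal s) = ENNReal.ofReal (fR μ s) := by
  rw [fR, ENNReal.ofReal_tsum_of_nonneg (fun k => by positivity) (summable_fR h0 h1), fE]
  congr 1
  ext k
  rw [ENNReal.ofReal_mul (pmf_nonneg k), ENNReal.ofReal_toReal (pmf_ne_top k),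
    ← ENNReal.ofReal_pow h0]
  ring

lemma fE_mono {s t : ℝ≥0∞} (h : s ≤ t) : fE μ s ≤ fE μ t := by
  refine ENNReal.tsum_le_tsum (fun k => ?_)
  exact mul_le_mul_left (pow_le_pow_left' h k) _

lemma iter_le {t : ℝ≥0∞} (h : fE μ t ≤ t) (n : ℕ) : (fE μ)^[n] (0:ℝ≥0∞) ≤ t := by
  induction n with
  | zero => exact zero_le
  | succ n ih =>
    rw [Function.iterate_succ_apply']
    exact le_trans (fE_mono ih) h

lemma fE_sup_ge : (⨆ n, (fE μ)^[n] (0:ℝ≥0∞)) ≤ fE μ (⨆ n, (fE μ)^[n] (0:ℝ≥0∞)) := by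
  refine iSup_le (fun n => ?_)
  cases n with
  | zero => exact zero_le
  | succ n =>
    rw [Function.iterate_succ_apply']
    exact fE_mono (le_iSup (fun n => (fE μ)^[n] (0:ℝ≥0∞)) n)

/-- splitting of the mean -/
lemma mMean_split (μ : PMF ℕ) (ℓ : ℕ) :
    mMean μ = (∑ k ∈ Finset.range ℓ, (k : ℝ≥0∞) * μ k) + tailMean μ ℓ := by
  rw [mMean, tailMean]
  have : ∀ k : ℕ, (k : ℝ≥0∞) * μ k
      = (if k < ℓ then (k : ℝ≥0∞) * μ k else 0) + (if ℓ ≤ k then (k : ℝ≥0∞) * μ k else 0) := by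
    intro k
    rcases Nat.lt_or_ge k ℓ with h | h
    · simp [h, Nat.not_le.mpr h]
    · simp [h, Nat.not_lt.mpr h]
  conv_lhs => rw [show (fun k : ℕ => (k : ℝ≥0∞) * μ k) = _ from funext this]
  rw [ENNReal.tsum_add]
  congr 1
  rw [tsum_eq_sum (s := Finset.range ℓ) (fun k hk => if_neg (fun h => hk (Finset.mem_range.mpr h)))]
  refine Finset.sum_congr rfl (fun k hk => ?_)
  rw [if_pos (Finset.mem_range.mp hk)]

lemma tailMean_mono (μ : PMF ℕ) {ℓ ℓ' : ℕ} (h : ℓ ≤ ℓ') : tailMean μ ℓ' ≤ tailMean μ ℓ := by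
  refine ENNReal.tsum_le_tsum (fun k => ?_)
  rcases Nat.lt_or_ge k ℓ' with hk | hk
  · simp only [if_neg (Nat.not_le.mpr hk)]; exact zero_le
  · simp only [if_pos hk, if_pos (le_trans h hk)]; exact le_rfl

end Aux4
noncomputable section Aux5
open MeasureTheory ProbabilityTheory ENNReal

lemma dTV_self (μ : PMF ℕ) : dTV μ μ = 0 := by
  simp [dTV]

lemma summable_absdiff (μ₁ μ₂ : PMF ℕ) :
    Summable (fun k : ℕ => |(μ₁ k).toReal - (μ₂ k).toReal|) := by
  refine Summable.of_nonneg_of_le (fun k => abs_nonneg _) (fun k => ?_)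
    ((summable_pmf (μ := μ₁)).add (summable_pmf (μ := μ₂)))
  refine le_trans (abs_sub _ _) ?_
  rw [abs_of_nonneg (pmf_nonneg k), abs_of_nonneg (pmf_nonneg k)]

lemma lowsum_diff (μ₁ μ₂ : PMF ℕ) (ℓ : ℕ) :
    |∑ k ∈ Finset.range ℓ, (k:ℝ) * (μ₂ k).toReal
      - ∑ k ∈ Finset.range ℓ, (k:ℝ) * (μ₁ k).toReal| ≤ ℓ * (2 * dTV μ₁ μ₂) := by
  have h2 : ∑' k : ℕ, |(μ₁ k).toReal - (μ₂ k).toReal| = 2 * dTV μ₁ μ₂ := by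
    rw [dTV]; ring
  rw [← Finset.sum_sub_distrib]
  calc |∑ k ∈ Finset.range ℓ, ((k:ℝ) * (μ₂ k).toReal - (k:ℝ) * (μ₁ k).toReal)|
      ≤ ∑ k ∈ Finset.range ℓ, |(k:ℝ) * (μ₂ k).toReal - (k:ℝ) * (μ₁ k).toReal| :=
        Finset.abs_sum_le_sum_abs _ _
    _ ≤ ∑ k ∈ Finset.range ℓ, (ℓ:ℝ) * |(μ₁ k).toReal - (μ₂ k).toReal| := by
        refine Finset.sum_le_sum (fun k hk => ?_)
        rw [← mul_sub, abs_mul, Nat.abs_cast, abs_sub_comm]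
        exact mul_le_mul_of_nonneg_right
          (Nat.cast_le.mpr (le_of_lt (Finset.mem_range.mp hk))) (abs_nonneg _)
    _ = (ℓ:ℝ) * ∑ k ∈ Finset.range ℓ, |(μ₁ k).toReal - (μ₂ k).toReal| := by
        rw [Finset.mul_sum]
    _ ≤ (ℓ:ℝ) * ∑' k : ℕ, |(μ₁ k).toReal - (μ₂ k).toReal| := by
        refine mul_le_mul_of_nonneg_left ?_ (Nat.cast_nonneg ℓ)
        exact Summable.sum_le_tsum _ (fun k _ => abs_nonneg _) (summable_absdiff μ₁ μ₂)
    _ = ℓ * (2 * dTV μ₁ μ₂) := by rw [h2]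

/-- Lemma B : generating function bound from low-sum mass -/
lemma fR_le_of_lowsum (μ : PMF ℕ) {s : ℝ} (h0 : 0 ≤ s) (h1 : s ≤ 1) (ℓ : ℕ) {c : ℝ}
    (hc0 : 0 ≤ c)
    (hc : 1 + c ≤ s ^ ℓ * ∑ k ∈ Finset.range ℓ, (k:ℝ) * (μ k).toReal) :
    fR μ s ≤ s - c * (1 - s) := by
  have hsummand : ∀ k : ℕ, (0:ℝ) ≤ (μ k).toReal * (1 - s ^ k) := by
    intro k
    have : s ^ k ≤ 1 := pow_le_one₀ h0 h1
    have := pmf_nonneg (μ := μ) k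
    nlinarith
  have hsum1 : Summable (fun k : ℕ => (μ k).toReal * (1 - s ^ k)) := by
    have : (fun k : ℕ => (μ k).toReal * (1 - s ^ k))
        = fun k : ℕ => (μ k).toReal - (μ k).toReal * s ^ k := by ext k; ring
    rw [this]
    exact (summable_pmf (μ := μ)).sub (summable_fR h0 h1)
  have key : 1 - fR μ s = ∑' k : ℕ, (μ k).toReal * (1 - s ^ k) := by
    have : (fun k : ℕ => (μ k).toReal * (1 - s ^ k))
        = fun k : ℕ => (μ k).toReal - (μ k).toReal * s ^ k := by ext k; ring
    rw [this, Summable.tsum_sub (summable_pmf (μ := μ)) (summable_fR h0 h1), tsum_pmf, fR]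
  have hterm : ∀ k ∈ Finset.range ℓ,
      (k:ℝ) * s ^ ℓ * (1 - s) * (μ k).toReal ≤ (μ k).toReal * (1 - s ^ k) := by
    intro k hk
    have hkℓ : k < ℓ := Finset.mem_range.mp hk
    have hgeom : (1:ℝ) - s ^ k = (∑ j ∈ Finset.range k, s ^ j) * (1 - s) := by
      have := geom_sum_mul s k
      nlinarith [this]
    have hjs : ∀ j ∈ Finset.range k, s ^ ℓ ≤ s ^ j := by
      intro j hj
      exact pow_le_pow_of_le_one h0 h1 (le_of_lt (lt_of_lt_of_le (Finset.mem_range.mp hj) (le_of_lt hkℓ)))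
    have hsumge : (k:ℝ) * s ^ ℓ ≤ ∑ j ∈ Finset.range k, s ^ j := by
      calc (k:ℝ) * s ^ ℓ = ∑ _j ∈ Finset.range k, s ^ ℓ := by
            rw [Finset.sum_const, Finset.card_range, nsmul_eq_mul]
        _ ≤ ∑ j ∈ Finset.range k, s ^ j := Finset.sum_le_sum hjs
    have hs1 : 0 ≤ 1 - s := by linarith
    have := pmf_nonneg (μ := μ) k
    calc (k:ℝ) * s ^ ℓ * (1 - s) * (μ k).toReal
        ≤ (∑ j ∈ Finset.range k, s ^ j) * (1 - s) * (μ k).toReal := by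
          refine mul_le_mul_of_nonneg_right (mul_le_mul_of_nonneg_right hsumge hs1) this
      _ = (μ k).toReal * (1 - s ^ k) := by rw [hgeom]; ring
  have hlow : (1 + c) * (1 - s) ≤ 1 - fR μ s := by
    rw [key]
    calc (1 + c) * (1 - s)
        ≤ (s ^ ℓ * ∑ k ∈ Finset.range ℓ, (k:ℝ) * (μ k).toReal) * (1 - s) := by
          refine mul_le_mul_of_nonneg_right hc (by linarith)
      _ = ∑ k ∈ Finset.range ℓ, (k:ℝ) * s ^ ℓ * (1 - s) * (μ k).toReal := by
          rw [Finset.mul_sum, Finset.sum_mul]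
          refine Finset.sum_congr rfl (fun k _ => by ring)
      _ ≤ ∑ k ∈ Finset.range ℓ, (μ k).toReal * (1 - s ^ k) := Finset.sum_le_sum hterm
      _ ≤ ∑' k : ℕ, (μ k).toReal * (1 - s ^ k) :=
          Summable.sum_le_tsum _ (fun k _ => hsummand k) hsum1
  nlinarith [hlow]

/-- Lemma C : derivative bound -/
lemma fgenDeriv_le (μ : PMF ℕ) {q s γ : ℝ} (hq0 : 0 ≤ q) (hqs : q < s) (hs1 : s ≤ 1)
    (hmean : mMean μ ≠ ⊤) (hfq : q ≤ fR μ q) (hfs : fR μ s ≤ s - γ) (hγ : 0 ≤ γ) :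
    fgenDeriv μ q ≤ 1 - γ := by
  have hs0 : 0 ≤ s := le_trans hq0 (le_of_lt hqs)
  have hq1 : q ≤ 1 := le_trans (le_of_lt hqs) hs1
  have hka : Summable (fun k : ℕ => (k:ℝ) * (μ k).toReal) := by
    have := ENNReal.summable_toReal (f := fun k : ℕ => (k : ℝ≥0∞) * μ k) hmean
    convert this using 2 with k
    simp [ENNReal.toReal_mul]
  have hsummD : Summable (fun k : ℕ => (k:ℝ) * q ^ (k-1) * (μ k).toReal) := by
    refine Summable.of_nonneg_of_le (fun k => by positivity) (fun k => ?_) hka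
    have h1 : q ^ (k-1) ≤ 1 := pow_le_one₀ hq0 hq1
    have hnn := pmf_nonneg (μ := μ) k
    have hk : (0:ℝ) ≤ (k:ℝ) := Nat.cast_nonneg k
    calc (k:ℝ) * q ^ (k-1) * (μ k).toReal ≤ (k:ℝ) * 1 * (μ k).toReal :=
          mul_le_mul_of_nonneg_right (mul_le_mul_of_nonneg_left h1 hk) hnn
      _ = (k:ℝ) * (μ k).toReal := by ring
  have htermwise : ∀ k : ℕ, (k:ℝ) * q ^ (k-1) * (μ k).toReal * (s - q)
      ≤ (μ k).toReal * s ^ k - (μ k).toReal * q ^ k := by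
    intro k
    rcases Nat.eq_zero_or_pos k with hk | hk
    · subst hk; simp
    have hgeom := geom_sum₂_mul s q k
    have hjge : ∀ j ∈ Finset.range k, q ^ (k-1) ≤ s ^ j * q ^ (k-1-j) := by
      intro j hj
      have hjk : j < k := Finset.mem_range.mp hj
      have h1 : q ^ j ≤ s ^ j := pow_le_pow_left₀ hq0 (le_of_lt hqs) j
      calc q ^ (k-1) = q ^ j * q ^ (k-1-j) := by
            rw [← pow_add]
            congr 1
            omega
        _ ≤ s ^ j * q ^ (k-1-j) := by
            refine mul_le_mul_of_nonneg_right h1 (by positivity)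
    have hsum : (k:ℝ) * q ^ (k-1) ≤ ∑ j ∈ Finset.range k, s ^ j * q ^ (k-1-j) := by
      calc (k:ℝ) * q ^ (k-1) = ∑ _j ∈ Finset.range k, q ^ (k-1) := by
            rw [Finset.sum_const, Finset.card_range, nsmul_eq_mul]
        _ ≤ _ := Finset.sum_le_sum hjge
    have hsq : 0 ≤ s - q := by linarith
    have hmainineq : (k:ℝ) * q ^ (k-1) * (s - q) ≤ s ^ k - q ^ k := by
      calc (k:ℝ) * q ^ (k-1) * (s - q)
          ≤ (∑ j ∈ Finset.range k, s ^ j * q ^ (k-1-j)) * (s - q) :=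
            mul_le_mul_of_nonneg_right hsum hsq
        _ = s ^ k - q ^ k := hgeom
    have hnn := pmf_nonneg (μ := μ) k
    nlinarith
  have hsub : Summable (fun k : ℕ => (μ k).toReal * s ^ k - (μ k).toReal * q ^ k) :=
    (summable_fR hs0 hs1).sub (summable_fR hq0 hq1)
  have hDd : fgenDeriv μ q * (s - q) ≤ fR μ s - fR μ q := by
    rw [fgenDeriv, ← tsum_mul_right, fR, fR,
      ← Summable.tsum_sub (summable_fR hs0 hs1) (summable_fR hq0 hq1)]
    exact Summable.tsum_le_tsum htermwise (hsummD.mul_right _) hsub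
  have hd0 : 0 < s - q := by linarith
  have hd1 : s - q ≤ 1 := by linarith
  have h2 : fgenDeriv μ q * (s - q) ≤ (1 - γ) * (s - q) := by
    calc fgenDeriv μ q * (s - q) ≤ fR μ s - fR μ q := hDd
      _ ≤ (s - γ) - q := by linarith
      _ ≤ (1 - γ) * (s - q) := by nlinarith
  exact le_of_mul_le_mul_right h2 hd0
end Aux5
open MeasureTheory ProbabilityTheory ENNReal in
/-- Lemma 3.2(i): local uniform bounds on the extinction probability `q_μ` and
on `f_μ'(q_μ)` on a locally uniformly ψ₁-integrating set of supercritical laws. -/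
theorem extinction_bounds_local
    (P : PMF ℕ → Measure GWOmega) (hP : ∀ μ, IsGWMeasure (P μ) μ)
    (N : Set (PMF ℕ)) (hN : N ⊆ N11) (hint : LocUnifIntegrating N)
    (hm : ∀ μ ∈ N, 1 < mReal μ) :
    ∀ μ₁ ∈ N, ∃ p > (0 : ℝ), ∃ δ > (0 : ℝ), ∀ μ₂ ∈ N, dTV μ₁ μ₂ ≤ δ →
      extinctProb (P μ₂) ≤ 1 - p ∧
        fgenDeriv μ₂ (extinctProb (P μ₂)) ≤ 1 - p := by
  intro μ₁ hμ₁
  have hm₁ : 1 < mReal μ₁ := hm μ₁ hμ₁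
  set ε : ℝ := (mReal μ₁ - 1)/4 with hεdef
  have hε : 0 < ε := by rw [hεdef]; linarith
  obtain ⟨δ₀, hδ₀, ℓ₀, hℓ₀⟩ := hint ε hε μ₁ hμ₁
  set ℓ : ℕ := ℓ₀ + 1 with hℓdef
  have hℓpos : 0 < ℓ := Nat.succ_pos _
  have htail : ∀ μ₂ ∈ N, dTV μ₁ μ₂ ≤ δ₀ → tailMean μ₂ ℓ ≤ ENNReal.ofReal ε :=
    fun μ₂ h2 hd => le_trans (tailMean_mono μ₂ (Nat.le_succ ℓ₀)) (hℓ₀ μ₂ h2 hd)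
  set r : ℝ := (1 + ε) / (1 + 2*ε) with hrdef
  have hr0 : 0 < r := by rw [hrdef]; positivity
  have hr1 : r < 1 := by rw [hrdef, div_lt_one (by linarith)]; linarith
  set st : ℝ := r ^ ((ℓ:ℝ)⁻¹) with hstdef
  have hst0 : 0 < st := Real.rpow_pos_of_pos hr0 _
  have hst1 : st < 1 := Real.rpow_lt_one (le_of_lt hr0) hr1 (by positivity)
  have hst1' : st ≤ 1 := le_of_lt hst1
  have hstpow : st ^ ℓ = r := by
    rw [hstdef, ← Real.rpow_natCast (r ^ ((ℓ:ℝ)⁻¹)) ℓ, ← Real.rpow_mul (le_of_lt hr0),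
      inv_mul_cancel₀ (Nat.cast_ne_zero.mpr (Nat.pos_iff_ne_zero.mp hℓpos)), Real.rpow_one]
  set γ : ℝ := ε * (1 - st) with hγdef
  have hγ : 0 < γ := mul_pos hε (by linarith)
  set p : ℝ := min γ (1 - st) with hpdef
  have hp : 0 < p := lt_min hγ (by linarith)
  set δ : ℝ := min δ₀ (ε / (2 * ℓ)) with hδdef
  have hδ : 0 < δ := lt_min hδ₀ (by positivity)
  refine ⟨p, hp, δ, hδ, fun μ₂ hμ₂ hdTV => ?_⟩
  have htail₂ : tailMean μ₂ ℓ ≤ ENNReal.ofReal ε :=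
    htail μ₂ hμ₂ (le_trans hdTV (min_le_left _ _))
  have htail₁ : tailMean μ₁ ℓ ≤ ENNReal.ofReal ε :=
    htail μ₁ hμ₁ (by rw [dTV_self]; exact le_of_lt hδ₀)
  have hfin₁ : mMean μ₁ ≠ ⊤ := ne_of_lt (hN hμ₁)
  have hfin₂ : mMean μ₂ ≠ ⊤ := ne_of_lt (hN hμ₂)
  set L₁ : ℝ := ∑ k ∈ Finset.range ℓ, (k:ℝ) * (μ₁ k).toReal with hL₁def
  set L₂ : ℝ := ∑ k ∈ Finset.range ℓ, (k:ℝ) * (μ₂ k).toReal with hL₂def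
  have hL₁low : mReal μ₁ - ε ≤ L₁ := by
    have hsplit := mMean_split μ₁ ℓ
    have hlowfin : (∑ k ∈ Finset.range ℓ, (k : ℝ≥0∞) * μ₁ k) ≠ ⊤ := by
      refine ne_top_of_le_ne_top hfin₁ ?_
      rw [hsplit]; exact le_self_add
    have htailfin : tailMean μ₁ ℓ ≠ ⊤ := ne_top_of_le_ne_top ofReal_ne_top htail₁
    have hmr : mReal μ₁ = L₁ + (tailMean μ₁ ℓ).toReal := by
      rw [mReal, hsplit, ENNReal.toReal_add hlowfin htailfin]
      congr 1
      rw [ENNReal.toReal_sum (fun k _ => ENNReal.mul_ne_top (natCast_ne_top k) (pmf_ne_top k))]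
      refine Finset.sum_congr rfl fun k _ => ?_
      rw [ENNReal.toReal_mul]
      simp
    have htr : (tailMean μ₁ ℓ).toReal ≤ ε :=
      ENNReal.toReal_le_of_le_ofReal (le_of_lt hε) htail₁
    linarith
  have hL₂low : 1 + 2*ε ≤ L₂ := by
    have hd := lowsum_diff μ₁ μ₂ ℓ
    have h2δ : (ℓ:ℝ) * (2 * dTV μ₁ μ₂) ≤ ε := by
      have h1 : dTV μ₁ μ₂ ≤ ε / (2*ℓ) := le_trans hdTV (min_le_right _ _)
      have hℓR : (0:ℝ) < ℓ := Nat.cast_pos.mpr hℓpos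
      calc (ℓ:ℝ) * (2 * dTV μ₁ μ₂) ≤ (ℓ:ℝ) * (2 * (ε/(2*ℓ))) := by
            refine mul_le_mul_of_nonneg_left
              (mul_le_mul_of_nonneg_left h1 (by norm_num)) (le_of_lt hℓR)
        _ = ε := by field_simp
    have habs := abs_le.mp (le_trans hd h2δ)
    have hm4 : mReal μ₁ = 1 + 4*ε := by rw [hεdef]; ring
    rw [← hL₁def, ← hL₂def] at habs
    linarith [hL₁low, habs.1]
  have hfRst : fR μ₂ st ≤ st - ε * (1 - st) := by
    refine fR_le_of_lowsum μ₂ (le_of_lt hst0) hst1' ℓ (le_of_lt hε) ?_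
    rw [hstpow, ← hL₂def]
    calc (1:ℝ) + ε = r * (1 + 2*ε) := by rw [hrdef]; field_simp
      _ ≤ r * L₂ := mul_le_mul_of_nonneg_left hL₂low (le_of_lt hr0)
  have hGW := hP μ₂
  have hfEst : fE μ₂ (ENNReal.ofReal st) ≤ ENNReal.ofReal st := by
    rw [fE_ofReal (le_of_lt hst0) hst1']
    refine ENNReal.ofReal_le_ofReal ?_
    nlinarith [hfRst, hε, hst1]
  have hqe : (P μ₂) {ω : GWOmega | ∃ n, Z n ω = 0} = ⨆ n, (fE μ₂)^[n] 0 := ext_eq hGW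
  have hqele : (P μ₂) {ω : GWOmega | ∃ n, Z n ω = 0} ≤ ENNReal.ofReal st := by
    rw [hqe]; exact iSup_le (fun n => iter_le hfEst n)
  set q : ℝ := extinctProb (P μ₂) with hqdef
  have hq0 : 0 ≤ q := ENNReal.toReal_nonneg
  have hqst : q ≤ st := ENNReal.toReal_le_of_le_ofReal (le_of_lt hst0) hqele
  have hq1 : q ≤ 1 := le_trans hqst hst1'
  have hqene : (P μ₂) {ω : GWOmega | ∃ n, Z n ω = 0} ≠ ⊤ :=
    ne_top_of_le_ne_top ofReal_ne_top hqele
  have hofq : ENNReal.ofReal q = (P μ₂) {ω : GWOmega | ∃ n, Z n ω = 0} :=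
    ENNReal.ofReal_toReal hqene
  have hfq : q ≤ fR μ₂ q := by
    have h1 : (P μ₂) {ω : GWOmega | ∃ n, Z n ω = 0}
        ≤ fE μ₂ ((P μ₂) {ω : GWOmega | ∃ n, Z n ω = 0}) := by
      rw [hqe]; exact fE_sup_ge
    rw [← hofq, fE_ofReal hq0 hq1] at h1
    exact (ENNReal.ofReal_le_ofReal_iff
      (tsum_nonneg (fun k => mul_nonneg (pmf_nonneg k) (pow_nonneg hq0 k)))).mp h1
  have hqlt : q < st := by
    rcases lt_or_eq_of_le hqst with h | h
    · exact h
    · exfalso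
      rw [h] at hfq
      nlinarith [hfRst, hγ]
  have hder : fgenDeriv μ₂ q ≤ 1 - γ :=
    fgenDeriv_le μ₂ hq0 hqlt hst1' hfin₂ hfq (by rw [hγdef]; exact hfRst) (le_of_lt hγ)
  constructor
  · have hple : p ≤ 1 - st := min_le_right γ (1 - st)
    linarith
  · have hple : p ≤ γ := min_le_left γ (1 - st)
    linarith
end

section
/- Let 𝒩 ⊆ 𝒩₁¹ be a locally uniformly ψ₁-integrating set with m_μ > 1 for all μ ∈ 𝒩. Then for every μ₁ ∈ 𝒩, k ∈ ℕ, and ε > 0 there exist δ > 0 and n₀ ∈ ℕ such that for all μ₂ ∈ 𝒩 with d_TV(μ₁,μ₂) ≤ δ and all n ≥ n₀ one has ℙ^{μ₂}[Z_n = k | Z_n > 0] ≤ ε. -/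
open MeasureTheory ProbabilityTheory ENNReal Metric

namespace GWaux

open MeasureTheory ProbabilityTheory ENNReal

noncomputable section

/-- Generating function of `μ`. -/
def phi (μ : PMF ℕ) (s : ℝ≥0∞) : ℝ≥0∞ := ∑' k : ℕ, s ^ k * μ k

/-- `∑_k k s^{k-1} μ_k`, a derivative-type quantity. -/
def cder (μ : PMF ℕ) (t : ℝ≥0∞) : ℝ≥0∞ := ∑' k : ℕ, (k : ℝ≥0∞) * t ^ (k - 1) * μ k

/-- σ-algebra generated by coordinate `p`. -/
def coordAlg (p : ℕ × ℕ) : MeasurableSpace GWOmega :=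
  MeasurableSpace.comap (fun ω => ω p) inferInstance

lemma coordAlg_le (p : ℕ × ℕ) : coordAlg p ≤ (inferInstance : MeasurableSpace GWOmega) :=
  measurable_iff_comap_le.mp (measurable_pi_apply p)

/-- σ-algebra of the first `n` generations' offspring variables. -/
def genAlg (n : ℕ) : MeasurableSpace GWOmega :=
  ⨆ p ∈ {q : ℕ × ℕ | q.1 < n}, coordAlg p

def sSet (n j : ℕ) : Set (ℕ × ℕ) := {q : ℕ × ℕ | q.1 < n ∨ (q.1 = n ∧ q.2 < j)}

/-- σ-algebra of the first `n` generations together with the first `j`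
individuals of generation `n`. -/
def sAlg (n j : ℕ) : MeasurableSpace GWOmega := ⨆ p ∈ sSet n j, coordAlg p

lemma genAlg_le_sAlg (n j : ℕ) : genAlg n ≤ sAlg n j :=
  biSup_mono (fun p (hp : p.1 < n) => Or.inl hp)

lemma genAlg_mono {n m : ℕ} (h : n ≤ m) : genAlg n ≤ genAlg m :=
  biSup_mono (fun p (hp : p.1 < n) => lt_of_lt_of_le hp h)

lemma coordAlg_le_genAlg {p : ℕ × ℕ} {n : ℕ} (h : p.1 < n) : coordAlg p ≤ genAlg n :=
  le_biSup _ h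

lemma coordAlg_le_sAlg {n j : ℕ} {i : ℕ} (h : i < j) : coordAlg (n, i) ≤ sAlg n j :=
  le_biSup _ (Or.inr ⟨rfl, h⟩)

lemma genAlg_le (n : ℕ) : genAlg n ≤ (inferInstance : MeasurableSpace GWOmega) :=
  iSup₂_le fun p _ => coordAlg_le p

lemma sAlg_le (n j : ℕ) : sAlg n j ≤ (inferInstance : MeasurableSpace GWOmega) :=
  iSup₂_le fun p _ => coordAlg_le p

lemma measurable_coord (p : ℕ × ℕ) : Measurable[coordAlg p] (fun ω : GWOmega => ω p) :=
  Measurable.of_comap_le le_rfl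

lemma measurable_sum_coord (n j : ℕ) :
    Measurable[sAlg n j] (fun ω : GWOmega => ∑ i ∈ Finset.range j, ω (n, i)) := by
  refine Finset.measurable_sum _ fun i hi => ?_
  exact (measurable_coord (n, i)).mono (coordAlg_le_sAlg (Finset.mem_range.mp hi)) le_rfl

lemma measurable_genAlg_Z (n : ℕ) : Measurable[genAlg n] (Z n) := by
  induction n with
  | zero => exact @measurable_const _ _ _ (genAlg 0) 1
  | succ n ih =>
      refine @measurable_to_countable' ℕ GWOmega _ _ (genAlg (n+1)) (Z (n+1)) fun k => ?_
      have heq : Z (n + 1) ⁻¹' {k} =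
          ⋃ j : ℕ, ({ω | Z n ω = j} ∩ {ω | ∑ i ∈ Finset.range j, ω (n, i) = k}) := by
        ext ω
        simp only [Set.mem_preimage, Set.mem_singleton_iff, Set.mem_iUnion, Set.mem_inter_iff,
          Set.mem_setOf_eq]
        constructor
        · intro h; exact ⟨Z n ω, rfl, h⟩
        · rintro ⟨j, hj, hk⟩
          rw [show Z (n+1) ω = ∑ i ∈ Finset.range (Z n ω), ω (n, i) from rfl, hj]; exact hk
      rw [heq]
      apply MeasurableSet.iUnion
      intro j
      apply MeasurableSet.inter
      · exact genAlg_mono (Nat.le_succ n) _ (ih (measurableSet_singleton j))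
      · have hm := measurable_sum_coord n j
        have : sAlg n j ≤ genAlg (n + 1) := by
          apply iSup₂_le
          rintro p (hp | ⟨hp1, _⟩)
          · exact coordAlg_le_genAlg (Nat.lt_succ_of_lt hp)
          · exact coordAlg_le_genAlg (by omega)
        exact this _ (hm (measurableSet_singleton k))

lemma measurable_Z (n : ℕ) : Measurable (Z n) :=
  (measurable_genAlg_Z n).mono (genAlg_le n) le_rfl

end
end GWaux

namespace GWaux
open MeasureTheory ProbabilityTheory ENNReal
noncomputable section

variable {P : Measure GWOmega} {μ : PMF ℕ}

lemma lintegral_coord (hP : IsGWMeasure P μ) (p : ℕ × ℕ) (g : ℕ → ℝ≥0∞) :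
    ∫⁻ ω, g (ω p) ∂P = ∑' k : ℕ, g k * μ k := by
  have h1 : ∫⁻ ω, g (ω p) ∂P = ∫⁻ x, g x ∂(P.map (fun ω => ω p)) :=
    (lintegral_map (measurable_from_top (f := g)) (measurable_pi_apply p)).symm
  rw [h1, hP.2.2 p, lintegral_countable']
  exact tsum_congr fun k => by
    simp [μ.toMeasure_apply_singleton k (measurableSet_singleton k)]

lemma indep_sAlg_coord (hP : IsGWMeasure P μ) (n j : ℕ) :
    Indep (sAlg n j) (coordAlg (n, j)) P := by
  have hind : iIndep coordAlg P := hP.2.1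
  have hdisj : Disjoint (sSet n j) ({(n, j)} : Set (ℕ × ℕ)) := by
    rw [Set.disjoint_singleton_right]
    simp [sSet]
  have h := indep_iSup_of_disjoint (fun p => coordAlg_le p) hind hdisj
  simpa [sAlg] using h

lemma lintegral_indicator_mul_prod (hP : IsGWMeasure P μ) (n : ℕ) (g : ℕ → ℝ≥0∞)
    {A : Set GWOmega} (hA : MeasurableSet[genAlg n] A) (j : ℕ) :
    ∫⁻ ω, A.indicator (fun _ => 1) ω * ∏ i ∈ Finset.range j, g (ω (n, i)) ∂P
      = P A * (∑' k : ℕ, g k * μ k) ^ j := by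
  haveI := hP.1
  induction j with
  | zero =>
      simp only [Finset.range_zero, Finset.prod_empty, mul_one, pow_zero]
      exact lintegral_indicator_one (genAlg_le n _ hA)
  | succ j ihj =>
      have hmf : Measurable[sAlg n j] (fun ω : GWOmega =>
          A.indicator (fun _ => 1) ω * ∏ i ∈ Finset.range j, g (ω (n, i))) := by
        refine Measurable.mul ?_ ?_
        · exact measurable_const.indicator (genAlg_le_sAlg n j _ hA)
        · refine Finset.measurable_prod _ fun i hi => ?_
          exact measurable_from_top.comp
            ((measurable_coord (n, i)).mono (coordAlg_le_sAlg (Finset.mem_range.mp hi)) le_rfl)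
      have hmg : Measurable[coordAlg (n, j)] (fun ω : GWOmega => g (ω (n, j))) :=
        measurable_from_top.comp (measurable_coord (n, j))
      calc ∫⁻ ω, A.indicator (fun _ => 1) ω * ∏ i ∈ Finset.range (j+1), g (ω (n, i)) ∂P
          = ∫⁻ ω, (A.indicator (fun _ => 1) ω * ∏ i ∈ Finset.range j, g (ω (n, i)))
              * g (ω (n, j)) ∂P := by
            simp_rw [Finset.prod_range_succ, mul_assoc]
        _ = (∫⁻ ω, A.indicator (fun _ => 1) ω * ∏ i ∈ Finset.range j, g (ω (n, i)) ∂P)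
              * ∫⁻ ω, g (ω (n, j)) ∂P :=
            lintegral_mul_eq_lintegral_mul_lintegral_of_independent_measurableSpace
              (sAlg_le n j) (coordAlg_le (n, j)) (indep_sAlg_coord hP n j) hmf hmg
        _ = P A * (∑' k : ℕ, g k * μ k) ^ j * (∑' k : ℕ, g k * μ k) := by
            rw [ihj, lintegral_coord hP]
        _ = P A * (∑' k : ℕ, g k * μ k) ^ (j+1) := by
            rw [mul_assoc, ← pow_succ]

/-- `E[s^{Z_n}]`. -/
def Fgen (P : Measure GWOmega) (n : ℕ) (s : ℝ≥0∞) : ℝ≥0∞ := ∫⁻ ω, s ^ (Z n ω) ∂P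

lemma Fgen_eq_tsum (P : Measure GWOmega) (n : ℕ) (s : ℝ≥0∞) :
    Fgen P n s = ∑' j : ℕ, P (Z n ⁻¹' {j}) * s ^ j := by
  have h1 : ∀ ω : GWOmega, s ^ (Z n ω)
      = ∑' j : ℕ, Set.indicator (Z n ⁻¹' {j}) (fun _ => s ^ j) ω := by
    intro ω
    rw [tsum_eq_single (Z n ω)]
    · rw [Set.indicator_of_mem (by simp : ω ∈ Z n ⁻¹' {Z n ω})]
    · intro j hj
      exact Set.indicator_of_notMem (by simpa using fun h => (hj h.symm).elim) _
  simp only [Fgen]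
  simp_rw [h1]
  rw [lintegral_tsum (fun j =>
    (measurable_const.indicator ((measurable_Z n) (measurableSet_singleton j))).aemeasurable)]
  refine tsum_congr fun j => ?_
  rw [lintegral_indicator_const ((measurable_Z n) (measurableSet_singleton j)), mul_comm]

lemma Fgen_succ (hP : IsGWMeasure P μ) (n : ℕ) (s : ℝ≥0∞) :
    Fgen P (n+1) s = Fgen P n (phi μ s) := by
  have h1 : ∀ ω : GWOmega, s ^ (Z (n+1) ω)
      = ∑' j : ℕ, Set.indicator (Z n ⁻¹' {j}) (fun _ => 1) ω
          * ∏ i ∈ Finset.range j, s ^ (ω (n, i)) := by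
    intro ω
    rw [tsum_eq_single (Z n ω)]
    · rw [Set.indicator_of_mem (by simp : ω ∈ Z n ⁻¹' {Z n ω}), one_mul,
        Finset.prod_pow_eq_pow_sum]
      rfl
    · intro j hj
      rw [Set.indicator_of_notMem (by simpa using fun h => (hj h.symm).elim), zero_mul]
  simp only [Fgen]
  simp_rw [h1]
  rw [lintegral_tsum]
  · have h2 : ∀ j : ℕ, ∫⁻ ω, Set.indicator (Z n ⁻¹' {j}) (fun _ => 1) ω
        * ∏ i ∈ Finset.range j, s ^ (ω (n, i)) ∂P = P (Z n ⁻¹' {j}) * (phi μ s) ^ j := by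
      intro j
      exact lintegral_indicator_mul_prod hP n (fun k => s ^ k)
        ((measurable_genAlg_Z n) (measurableSet_singleton j)) j
    rw [tsum_congr h2, ← Fgen_eq_tsum]
    rfl
  · intro j
    refine Measurable.aemeasurable (Measurable.mul ?_ ?_)
    · exact measurable_const.indicator ((measurable_Z n) (measurableSet_singleton j))
    · exact Finset.measurable_prod _ fun i _ => measurable_from_top.comp (measurable_pi_apply _)

lemma Fgen_zero (hP : IsGWMeasure P μ) (s : ℝ≥0∞) : Fgen P 0 s = s := by
  haveI := hP.1
  simp [Fgen, show ∀ ω : GWOmega, Z 0 ω = 1 from fun _ => rfl]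

lemma Fgen_iterate (hP : IsGWMeasure P μ) (n : ℕ) (s : ℝ≥0∞) :
    Fgen P n s = (phi μ)^[n] s := by
  induction n generalizing s with
  | zero => simpa using Fgen_zero hP s
  | succ n ih => rw [Fgen_succ hP, ih, ← Function.iterate_succ_apply]

end
end GWaux

namespace GWaux
open ENNReal
noncomputable section

lemma phi_mono (μ : PMF ℕ) : Monotone (phi μ) := fun _ _ hxy =>
  Summable.tsum_le_tsum (fun k => mul_le_mul_left (pow_le_pow_left' hxy k) _)
    ENNReal.summable ENNReal.summable

lemma phi_le_one (μ : PMF ℕ) {s : ℝ≥0∞} (hs : s ≤ 1) : phi μ s ≤ 1 := by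
  calc phi μ s ≤ ∑' k, μ k := by
        refine Summable.tsum_le_tsum (fun k => ?_) ENNReal.summable ENNReal.summable
        calc s ^ k * μ k ≤ 1 * μ k := mul_le_mul_left (pow_le_one' hs k) _
          _ = μ k := one_mul _
    _ = 1 := μ.tsum_coe

lemma term_upper {x y t : ℝ≥0∞} (hxy : x ≤ y) (hyt : y ≤ t) (ht : t ≤ 1) :
    ∀ k : ℕ, y ^ k ≤ x ^ k + (y - x) * ((k : ℝ≥0∞) * t ^ (k - 1)) := by
  intro k
  induction k with
  | zero => simp
  | succ k ih =>
      rcases Nat.eq_zero_or_pos k with rfl | hk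
      · simpa using le_add_tsub
      · have htt : t * t ^ (k - 1) = t ^ k := by
          rw [← pow_succ']; congr 1; omega
        have hxt : x ≤ t := hxy.trans hyt
        calc y ^ (k + 1) = y * y ^ k := pow_succ' y k
          _ ≤ y * (x ^ k + (y - x) * ((k : ℝ≥0∞) * t ^ (k - 1))) := mul_le_mul_right ih y
          _ = y * x ^ k + y * ((y - x) * ((k : ℝ≥0∞) * t ^ (k - 1))) := mul_add y _ _
          _ ≤ (x + (y - x)) * x ^ k + t * ((y - x) * ((k : ℝ≥0∞) * t ^ (k - 1))) := by
              refine add_le_add (mul_le_mul_left ?_ _) (mul_le_mul_left hyt _)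
              rw [add_tsub_cancel_of_le hxy]
          _ = x ^ (k + 1) + ((y - x) * x ^ k + (y - x) * ((k : ℝ≥0∞) * (t * t ^ (k - 1)))) := by
              rw [add_mul, ← pow_succ']; ring
          _ ≤ x ^ (k + 1) + ((y - x) * t ^ k + (y - x) * ((k : ℝ≥0∞) * t ^ k)) := by
              rw [htt]
              exact add_le_add_right (add_le_add_left
                (mul_le_mul_right (pow_le_pow_left' hxt k) _) _) _
          _ = x ^ (k + 1) + (y - x) * (((k : ℝ≥0∞) + 1) * t ^ k) := by ring
          _ = x ^ (k + 1) + (y - x) * (((k : ℕ) + 1 : ℕ) * t ^ ((k + 1) - 1)) := by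
              push_cast; ring_nf
  
lemma term_lower {x y : ℝ≥0∞} (hxy : x ≤ y) (hy : y ≤ 1) :
    ∀ k : ℕ, (k : ℝ≥0∞) * x ^ (k - 1) * (y - x) + x ^ k ≤ y ^ k := by
  intro k
  induction k with
  | zero => simp
  | succ k ih =>
      rcases Nat.eq_zero_or_pos k with rfl | hk
      · simpa using (tsub_add_cancel_of_le hxy).le
      · have hxx : x * x ^ (k - 1) = x ^ k := by
          rw [← pow_succ']; congr 1; omega
        have hsplit : x * ((k : ℝ≥0∞) * x ^ (k - 1) * (y - x) + x ^ k)
            = (k : ℝ≥0∞) * x ^ k * (y - x) + x ^ (k + 1) := by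
          rw [mul_add, ← pow_succ', show x * ((k : ℝ≥0∞) * x ^ (k - 1) * (y - x))
            = (k : ℝ≥0∞) * (x * x ^ (k - 1)) * (y - x) by ring, hxx]
        calc ((k : ℕ) + 1 : ℕ) * x ^ ((k + 1) - 1) * (y - x) + x ^ (k + 1)
            = (y - x) * x ^ k + ((k : ℝ≥0∞) * x ^ k * (y - x) + x ^ (k + 1)) := by
              push_cast; ring
          _ = (y - x) * x ^ k + x * ((k : ℝ≥0∞) * x ^ (k - 1) * (y - x) + x ^ k) := by
              rw [hsplit]
          _ ≤ (y - x) * x ^ k + x * y ^ k := add_le_add_right (mul_le_mul_right ih x) _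
          _ ≤ (y - x) * y ^ k + x * y ^ k :=
              add_le_add_left (mul_le_mul_right (pow_le_pow_left' hxy k) _) _
          _ = ((y - x) + x) * y ^ k := (add_mul _ _ _).symm
          _ = y * y ^ k := by rw [tsub_add_cancel_of_le hxy]
          _ = y ^ (k + 1) := (pow_succ' y k).symm

end
end GWaux

namespace GWaux
open ENNReal
noncomputable section

lemma phi_lipschitz (μ : PMF ℕ) {x y t : ℝ≥0∞} (hxy : x ≤ y) (hyt : y ≤ t) (ht : t ≤ 1) :
    phi μ y ≤ phi μ x + (y - x) * cder μ t := by
  have h1 : phi μ y ≤ ∑' k : ℕ, (x ^ k * μ k + (y - x) * ((k : ℝ≥0∞) * t ^ (k - 1) * μ k)) := by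
    refine Summable.tsum_le_tsum (fun k => ?_) ENNReal.summable ENNReal.summable
    calc y ^ k * μ k ≤ (x ^ k + (y - x) * ((k : ℝ≥0∞) * t ^ (k - 1))) * μ k :=
          mul_le_mul_left (term_upper hxy hyt ht k) _
      _ = x ^ k * μ k + (y - x) * ((k : ℝ≥0∞) * t ^ (k - 1) * μ k) := by ring
  calc phi μ y ≤ _ := h1
    _ = (∑' k : ℕ, x ^ k * μ k) + ∑' k : ℕ, (y - x) * ((k : ℝ≥0∞) * t ^ (k - 1) * μ k) :=
        ENNReal.tsum_add
    _ = phi μ x + (y - x) * cder μ t := by rw [ENNReal.tsum_mul_left]; rfl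

lemma phi_slope (μ : PMF ℕ) {x y : ℝ≥0∞} (hxy : x ≤ y) (hy : y ≤ 1) :
    cder μ x * (y - x) + phi μ x ≤ phi μ y := by
  have h1 : ∀ k : ℕ, ((k : ℝ≥0∞) * x ^ (k - 1) * μ k) * (y - x) + x ^ k * μ k ≤ y ^ k * μ k := by
    intro k
    calc ((k : ℝ≥0∞) * x ^ (k - 1) * μ k) * (y - x) + x ^ k * μ k
        = ((k : ℝ≥0∞) * x ^ (k - 1) * (y - x) + x ^ k) * μ k := by ring
      _ ≤ y ^ k * μ k := mul_le_mul_left (term_lower hxy hy k) _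
  calc cder μ x * (y - x) + phi μ x
      = ∑' k : ℕ, (((k : ℝ≥0∞) * x ^ (k - 1) * μ k) * (y - x) + x ^ k * μ k) := by
        rw [ENNReal.tsum_add, ENNReal.tsum_mul_right]; rfl
    _ ≤ ∑' k : ℕ, y ^ k * μ k := Summable.tsum_le_tsum h1 ENNReal.summable ENNReal.summable
    _ = phi μ y := rfl

lemma cder_term_le {t : ℝ≥0∞} (ht : t ≤ 1) (k : ℕ) :
    (k : ℝ≥0∞) * t ^ (k - 1) ≤ (1 - t)⁻¹ := by
  have h1 : (Finset.range k).card • t ^ (k - 1) ≤ ∑ j ∈ Finset.range k, t ^ j := by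
    refine Finset.card_nsmul_le_sum _ _ _ (fun j hj => ?_)
    exact pow_le_pow_right_of_le_one' ht (by have := Finset.mem_range.mp hj; omega)
  calc (k : ℝ≥0∞) * t ^ (k - 1) = (Finset.range k).card • t ^ (k - 1) := by
        rw [Finset.card_range, nsmul_eq_mul]
    _ ≤ ∑ j ∈ Finset.range k, t ^ j := h1
    _ ≤ ∑' j : ℕ, t ^ j := ENNReal.sum_le_tsum _
    _ = (1 - t)⁻¹ := ENNReal.tsum_geometric t

lemma pmf_ne_top (μ : PMF ℕ) (k : ℕ) : μ k ≠ ∞ :=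
  ne_top_of_le_ne_top one_ne_top (μ.coe_le_one k)

lemma abs_sub_summable (μ₁ μ₂ : PMF ℕ) :
    Summable (fun k : ℕ => |(μ₁ k).toReal - (μ₂ k).toReal|) := by
  have h1 : Summable (fun k : ℕ => (μ₁ k).toReal) :=
    ENNReal.summable_toReal (by rw [μ₁.tsum_coe]; exact one_ne_top)
  have h2 : Summable (fun k : ℕ => (μ₂ k).toReal) :=
    ENNReal.summable_toReal (by rw [μ₂.tsum_coe]; exact one_ne_top)
  refine (h1.add h2).of_nonneg_of_le (fun k => abs_nonneg _) (fun k => ?_)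
  calc |(μ₁ k).toReal - (μ₂ k).toReal| ≤ |(μ₁ k).toReal| + |(μ₂ k).toReal| := abs_sub _ _
    _ = (μ₁ k).toReal + (μ₂ k).toReal := by
        rw [abs_of_nonneg ENNReal.toReal_nonneg, abs_of_nonneg ENNReal.toReal_nonneg]

lemma tsum_ofReal_diff_le {μ₁ μ₂ : PMF ℕ} {δ : ℝ} (h : dTV μ₁ μ₂ ≤ δ) :
    ∑' k : ℕ, ENNReal.ofReal |(μ₁ k).toReal - (μ₂ k).toReal| ≤ ENNReal.ofReal (2 * δ) := by
  rw [← ENNReal.ofReal_tsum_of_nonneg (fun k => abs_nonneg _) (abs_sub_summable μ₁ μ₂)]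
  apply ENNReal.ofReal_le_ofReal
  have h2 : (∑' k : ℕ, |(μ₁ k).toReal - (μ₂ k).toReal|) = 2 * dTV μ₁ μ₂ := by
    rw [dTV]; ring
  rw [h2]; linarith

lemma pmf_le_add_diff (μ₁ μ₂ : PMF ℕ) (k : ℕ) :
    μ₂ k ≤ μ₁ k + ENNReal.ofReal |(μ₁ k).toReal - (μ₂ k).toReal| := by
  conv_lhs => rw [← ENNReal.ofReal_toReal (pmf_ne_top μ₂ k)]
  calc ENNReal.ofReal (μ₂ k).toReal
      ≤ ENNReal.ofReal ((μ₁ k).toReal + |(μ₁ k).toReal - (μ₂ k).toReal|) := by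
        apply ENNReal.ofReal_le_ofReal
        have := neg_abs_le ((μ₁ k).toReal - (μ₂ k).toReal)
        linarith
    _ = ENNReal.ofReal (μ₁ k).toReal + ENNReal.ofReal |(μ₁ k).toReal - (μ₂ k).toReal| :=
        ENNReal.ofReal_add ENNReal.toReal_nonneg (abs_nonneg _)
    _ = μ₁ k + ENNReal.ofReal |(μ₁ k).toReal - (μ₂ k).toReal| := by
        rw [ENNReal.ofReal_toReal (pmf_ne_top μ₁ k)]

lemma phi_perturb {μ₁ μ₂ : PMF ℕ} {δ : ℝ} (h : dTV μ₁ μ₂ ≤ δ) {s : ℝ≥0∞} (hs : s ≤ 1) :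
    phi μ₂ s ≤ phi μ₁ s + ENNReal.ofReal (2 * δ) := by
  calc phi μ₂ s
      ≤ ∑' k : ℕ, (s ^ k * μ₁ k + ENNReal.ofReal |(μ₁ k).toReal - (μ₂ k).toReal|) := by
        refine Summable.tsum_le_tsum (fun k => ?_) ENNReal.summable ENNReal.summable
        calc s ^ k * μ₂ k
            ≤ s ^ k * (μ₁ k + ENNReal.ofReal |(μ₁ k).toReal - (μ₂ k).toReal|) :=
              mul_le_mul_right (pmf_le_add_diff μ₁ μ₂ k) _
          _ = s ^ k * μ₁ k + s ^ k * ENNReal.ofReal |(μ₁ k).toReal - (μ₂ k).toReal| :=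
              mul_add _ _ _
          _ ≤ s ^ k * μ₁ k + 1 * ENNReal.ofReal |(μ₁ k).toReal - (μ₂ k).toReal| :=
              add_le_add_right (mul_le_mul_left (pow_le_one' hs k) _) _
          _ = s ^ k * μ₁ k + ENNReal.ofReal |(μ₁ k).toReal - (μ₂ k).toReal| := by rw [one_mul]
    _ = phi μ₁ s + ∑' k : ℕ, ENNReal.ofReal |(μ₁ k).toReal - (μ₂ k).toReal| := ENNReal.tsum_add
    _ ≤ phi μ₁ s + ENNReal.ofReal (2 * δ) := add_le_add_right (tsum_ofReal_diff_le h) _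

lemma cder_perturb {μ₁ μ₂ : PMF ℕ} {δ : ℝ} (h : dTV μ₁ μ₂ ≤ δ) {s : ℝ≥0∞} (hs : s ≤ 1) :
    cder μ₂ s ≤ cder μ₁ s + (1 - s)⁻¹ * ENNReal.ofReal (2 * δ) := by
  calc cder μ₂ s
      ≤ ∑' k : ℕ, ((k : ℝ≥0∞) * s ^ (k - 1) * μ₁ k
          + (1 - s)⁻¹ * ENNReal.ofReal |(μ₁ k).toReal - (μ₂ k).toReal|) := by
        refine Summable.tsum_le_tsum (fun k => ?_) ENNReal.summable ENNReal.summable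
        calc (k : ℝ≥0∞) * s ^ (k - 1) * μ₂ k
            ≤ (k : ℝ≥0∞) * s ^ (k - 1) * (μ₁ k
                + ENNReal.ofReal |(μ₁ k).toReal - (μ₂ k).toReal|) :=
              mul_le_mul_right (pmf_le_add_diff μ₁ μ₂ k) _
          _ = (k : ℝ≥0∞) * s ^ (k - 1) * μ₁ k
              + (k : ℝ≥0∞) * s ^ (k - 1) * ENNReal.ofReal |(μ₁ k).toReal - (μ₂ k).toReal| :=
              mul_add _ _ _
          _ ≤ (k : ℝ≥0∞) * s ^ (k - 1) * μ₁ k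
              + (1 - s)⁻¹ * ENNReal.ofReal |(μ₁ k).toReal - (μ₂ k).toReal| :=
              add_le_add_right (mul_le_mul_left (cder_term_le hs k) _) _
    _ = cder μ₁ s + (1 - s)⁻¹ * ∑' k : ℕ, ENNReal.ofReal |(μ₁ k).toReal - (μ₂ k).toReal| := by
        rw [ENNReal.tsum_add, ENNReal.tsum_mul_left]; rfl
    _ ≤ cder μ₁ s + (1 - s)⁻¹ * ENNReal.ofReal (2 * δ) :=
        add_le_add_right (mul_le_mul_right (tsum_ofReal_diff_le h) _) _

end
end GWaux

namespace GWaux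
open ENNReal
noncomputable section

lemma le_of_add_le_add_right' {a b c : ℝ≥0∞} (hc : c ≠ ∞) (h : a + c ≤ b + c) : a ≤ b :=
  (ENNReal.add_le_add_iff_right hc).mp h

lemma exists_s1 (μ : PMF ℕ) (h1 : 1 < mMean μ) :
    ∃ s₁ α : ℝ≥0∞, 0 < s₁ ∧ s₁ < 1 ∧ 0 < α ∧ phi μ s₁ + α ≤ s₁ := by
  rw [mMean, ENNReal.tsum_eq_iSup_sum] at h1
  obtain ⟨F, hF⟩ := lt_iSup_iff.mp h1
  set S := ∑ k ∈ F, (k : ℝ≥0∞) * μ k with hSdef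
  have hStop : S ≠ ∞ := by
    refine (ENNReal.sum_lt_top.mpr (fun k _ => ?_)).ne
    exact ENNReal.mul_lt_top (ENNReal.natCast_lt_top k) (lt_top_iff_ne_top.mpr (pmf_ne_top μ k))
  have hS0 : S ≠ 0 := fun h => (not_lt.mpr (h ▸ zero_le_one)) hF
  set a := (S - 1) / 2 with hadef
  have ha0 : 0 < a :=
    ENNReal.div_pos (by simpa [tsub_eq_zero_iff_le, not_le] using hF) ENNReal.ofNat_ne_top
  have hatop : a ≠ ∞ := (ENNReal.div_lt_top (ENNReal.sub_ne_top hStop) two_ne_zero).ne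
  have hSa : S = 1 + 2 * a := by
    rw [hadef, ENNReal.mul_div_cancel two_ne_zero ENNReal.ofNat_ne_top, add_tsub_cancel_of_le hF.le]
  set M := F.sup id + 1 with hMdef
  -- the key pointwise bound
  have key : ∀ s : ℝ≥0∞, s ≤ 1 → phi μ s + (1 - s) * s ^ M * S ≤ 1 := by
    intro s hs
    have hterm : ∀ k : ℕ,
        s ^ k * μ k + (if k ∈ F then (1 - s) * s ^ M * ((k : ℝ≥0∞) * μ k) else 0) ≤ μ k := by
      intro k
      by_cases hk : k ∈ F
      · rw [if_pos hk]
        have hMk : s ^ M ≤ s ^ (k - 1) := by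
          refine pow_le_pow_right_of_le_one' hs ?_
          have := Finset.le_sup (f := id) hk
          simp only [id] at this
          omega
        have h2 : (1 - s) * s ^ M * ((k : ℝ≥0∞) * μ k)
            ≤ ((k : ℝ≥0∞) * s ^ (k - 1) * μ k) * (1 - s) := by
          calc (1 - s) * s ^ M * ((k : ℝ≥0∞) * μ k)
              ≤ (1 - s) * s ^ (k - 1) * ((k : ℝ≥0∞) * μ k) :=
                mul_le_mul_left (mul_le_mul_right hMk _) _
            _ = ((k : ℝ≥0∞) * s ^ (k - 1) * μ k) * (1 - s) := by ring
        calc s ^ k * μ k + (1 - s) * s ^ M * ((k : ℝ≥0∞) * μ k)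
            ≤ s ^ k * μ k + ((k : ℝ≥0∞) * s ^ (k - 1) * μ k) * (1 - s) := add_le_add_right h2 _
          _ = ((k : ℝ≥0∞) * s ^ (k - 1) * (1 - s) + s ^ k) * μ k := by ring
          _ ≤ 1 ^ k * μ k := mul_le_mul_left (term_lower hs le_rfl k) _
          _ = μ k := by rw [one_pow, one_mul]
      · rw [if_neg hk, add_zero]
        calc s ^ k * μ k ≤ 1 ^ k * μ k := mul_le_mul_left (pow_le_pow_left' hs k) _
          _ = μ k := by rw [one_pow, one_mul]
    have hsum : (1 - s) * s ^ M * S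
        = ∑' k : ℕ, (if k ∈ F then (1 - s) * s ^ M * ((k : ℝ≥0∞) * μ k) else 0) := by
      rw [tsum_eq_sum (s := F) (fun k hk => if_neg hk)]
      rw [Finset.sum_congr rfl (fun k hk => if_pos hk), hSdef, Finset.mul_sum]
    calc phi μ s + (1 - s) * s ^ M * S
        = ∑' k : ℕ, (s ^ k * μ k
            + (if k ∈ F then (1 - s) * s ^ M * ((k : ℝ≥0∞) * μ k) else 0)) := by
          rw [ENNReal.tsum_add, hsum]; rfl
      _ ≤ ∑' k : ℕ, μ k := Summable.tsum_le_tsum hterm ENNReal.summable ENNReal.summable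
      _ = 1 := μ.tsum_coe
  -- choose s₁
  set ρ := (1 + a) / (1 + 2 * a) with hρdef
  have hρtop : (1 : ℝ≥0∞) + 2 * a ≠ ∞ := by
    simp [ENNReal.add_ne_top, ENNReal.mul_ne_top, hatop]
  have hρ1 : ρ < 1 := by
    rw [hρdef, ENNReal.div_lt_iff (Or.inl (by simp)) (Or.inl hρtop), one_mul, two_mul, ← add_assoc]
    exact ENNReal.lt_add_right (by simp [ENNReal.add_ne_top, hatop]) ha0.ne'
  have hρ0 : ρ ≠ 0 := by
    simp [hρdef, ENNReal.div_eq_zero_iff, hρtop]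
  have hρtop' : ρ ≠ ∞ := (ENNReal.div_lt_top (by simp [ENNReal.add_ne_top, hatop]) (by simp)).ne
  set s₁ := ρ ^ ((M : ℝ)⁻¹) with hs₁def
  have hM0 : M ≠ 0 := Nat.succ_ne_zero _
  have hs₁M : s₁ ^ M = ρ := by
    rw [hs₁def, ← ENNReal.rpow_natCast (ρ ^ ((M : ℝ)⁻¹)) M, ← ENNReal.rpow_mul,
      inv_mul_cancel₀ (by exact_mod_cast hM0), ENNReal.rpow_one]
  have hs₁1 : s₁ < 1 := ENNReal.rpow_lt_one hρ1 (by positivity)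
  have hs₁0 : 0 < s₁ :=
    ENNReal.rpow_pos (lt_of_le_of_ne (zero_le) (Ne.symm hρ0)) hρtop'
  -- conclude
  have hkey := key s₁ hs₁1.le
  have hρS : s₁ ^ M * S = 1 + a := by
    rw [hs₁M, hρdef, ← hSa, ENNReal.div_mul_cancel hS0 hStop]
  have h3 : phi μ s₁ + ((1 - s₁) * a + (1 - s₁)) ≤ s₁ + (1 - s₁) := by
    calc phi μ s₁ + ((1 - s₁) * a + (1 - s₁))
        = phi μ s₁ + (1 - s₁) * s₁ ^ M * S := by
          rw [mul_assoc, hρS, mul_add, mul_one, add_comm ((1-s₁) * a)]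
      _ ≤ 1 := hkey
      _ = s₁ + (1 - s₁) := (add_tsub_cancel_of_le hs₁1.le).symm
  have h4 : phi μ s₁ + (1 - s₁) * a + (1 - s₁) ≤ s₁ + (1 - s₁) := by
    rw [add_assoc]; exact h3
  refine ⟨s₁, (1 - s₁) * a, hs₁0, hs₁1, ?_, ?_⟩
  · refine ENNReal.mul_pos ?_ ha0.ne'
    simpa [tsub_eq_zero_iff_le, not_le] using hs₁1
  · exact le_of_add_le_add_right'
      (ENNReal.sub_ne_top one_ne_top) h4

end
end GWaux

namespace GWaux
open ENNReal
noncomputable section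

lemma exists_s0 (μ : PMF ℕ) {s₁ α : ℝ≥0∞} (hs₁1 : s₁ < 1) (hα : 0 < α)
    (hphi : phi μ s₁ + α ≤ s₁) :
    ∃ s₀ c β : ℝ≥0∞, 0 < s₀ ∧ s₀ < 1 ∧ c < 1 ∧ 0 < β ∧
      phi μ s₀ + β ≤ s₀ ∧ cder μ s₀ ≤ c := by
  classical
  have hαtop : α ≠ ∞ := (((le_add_self.trans hphi).trans_lt hs₁1).trans one_lt_top).ne
  set β := α / 2 with hβdef
  have hβ0 : 0 < β := ENNReal.div_pos hα.ne' ENNReal.ofNat_ne_top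
  have hββ : β + β = α := ENNReal.add_halves α
  have hβtop : β ≠ ∞ := (lt_of_le_of_lt (by rw [← hββ]; exact le_add_self)
      (lt_top_iff_ne_top.mpr hαtop)).ne
  set ψ : ℝ≥0∞ → ℝ≥0∞ := fun u => phi μ u + β with hψdef
  have hψmono : Monotone ψ := fun u v h => add_le_add_left (phi_mono μ h) β
  have hψs₁ : ψ s₁ + β ≤ s₁ := by
    rw [hψdef]; simp only []
    rw [add_assoc, hββ]; exact hphi
  set t : ℕ → ℝ≥0∞ := fun n => ψ^[n] s₁ with htdef
  have ht_succ : ∀ n, t (n + 1) = ψ (t n) := fun n => Function.iterate_succ_apply' ψ n s₁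
  have ht0 : t 0 = s₁ := rfl
  have hfix : ∀ n, ψ (t n) ≤ t n := by
    intro n
    induction n with
    | zero => rw [ht0]; exact le_self_add.trans hψs₁
    | succ n ih => rw [ht_succ]; exact hψmono ih
  have hdec : ∀ n, t (n + 1) ≤ t n := fun n => (ht_succ n).le.trans (hfix n)
  have ht1 : ∀ n, t n ≤ s₁ := by
    intro n
    induction n with
    | zero => exact le_rfl
    | succ n ih => exact (hdec n).trans ih
  have httop : ∀ n, t n ≠ ∞ := fun n =>
    (((ht1 n).trans_lt hs₁1).trans one_lt_top).ne
  set d : ℕ → ℝ≥0∞ := fun n => t n - t (n + 1) with hddef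
  have hdlow : β ≤ d 0 := by
    refine ENNReal.le_sub_of_add_le_left (httop 1) ?_
    rw [ht_succ 0, ht0]
    exact hψs₁
  have hdtop : ∀ n, d n ≠ ∞ := fun n => ENNReal.sub_ne_top (httop n)
  have hdcancel : ∀ n, d n + t (n + 1) = t n := fun n => tsub_add_cancel_of_le (hdec n)
  have htele : ∀ N, (∑ m ∈ Finset.range N, d m) + t N = t 0 := by
    intro N
    induction N with
    | zero => simp
    | succ N ih => rw [Finset.sum_range_succ, add_assoc, hdcancel N, ih]
  -- choose N and the contraction ratio r
  have hβR : 0 < β.toReal := ENNReal.toReal_pos hβ0.ne' hβtop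
  set N := max 1 (Nat.ceil (2 / β.toReal)) with hNdef
  have hN0 : N ≠ 0 := by positivity
  set r := (2⁻¹ : ℝ≥0∞) ^ ((N : ℝ)⁻¹) with hrdef
  have hr1 : r < 1 := ENNReal.rpow_lt_one (by norm_num) (by positivity)
  have hr0 : 0 < r := ENNReal.rpow_pos (by norm_num) (by norm_num)
  have hrN : r ^ N = 2⁻¹ := by
    rw [hrdef, ← ENNReal.rpow_natCast ((2⁻¹ : ℝ≥0∞) ^ ((N : ℝ)⁻¹)) N, ← ENNReal.rpow_mul,
      inv_mul_cancel₀ (by exact_mod_cast hN0), ENNReal.rpow_one]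
  -- there must be a contraction step
  have hexists : ∃ n, d (n + 1) ≤ r * d n := by
    by_contra hcon
    push_neg at hcon
    have hlow : ∀ n, r ^ n * d 0 ≤ d n := by
      intro n
      induction n with
      | zero => simpa using le_rfl
      | succ n ih =>
          calc r ^ (n + 1) * d 0 = r * (r ^ n * d 0) := by ring
            _ ≤ r * d n := mul_le_mul_right ih r
            _ ≤ d (n + 1) := (hcon n).le
    have hterm : ∀ m ∈ Finset.range (N + 1), 2⁻¹ * β ≤ d m := by
      intro m hm
      have hmN : m ≤ N := by
        have := Finset.mem_range.mp hm; omega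
      calc 2⁻¹ * β = r ^ N * β := by rw [hrN]
        _ ≤ r ^ m * β := mul_le_mul_left (pow_le_pow_right_of_le_one' hr1.le hmN) β
        _ ≤ r ^ m * d 0 := mul_le_mul_right hdlow _
        _ ≤ d m := hlow m
    have hsum : ((N : ℝ≥0∞) + 1) * (2⁻¹ * β) ≤ 1 := by
      have h1 : (Finset.range (N + 1)).card • (2⁻¹ * β) ≤ ∑ m ∈ Finset.range (N + 1), d m :=
        Finset.card_nsmul_le_sum _ _ _ hterm
      rw [Finset.card_range, nsmul_eq_mul] at h1
      calc ((N : ℝ≥0∞) + 1) * (2⁻¹ * β) = ((N + 1 : ℕ) : ℝ≥0∞) * (2⁻¹ * β) := by push_cast; ring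
        _ ≤ ∑ m ∈ Finset.range (N + 1), d m := h1
        _ ≤ t 0 := by rw [← htele (N + 1)]; exact le_self_add
        _ = s₁ := ht0
        _ ≤ 1 := hs₁1.le
    -- but (N+1)(β/2) > 1
    have hgt : (1 : ℝ≥0∞) < ((N : ℝ≥0∞) + 1) * (2⁻¹ * β) := by
      have hNR : 2 / β.toReal ≤ (N : ℝ) := by
        calc 2 / β.toReal ≤ (Nat.ceil (2 / β.toReal) : ℝ) := Nat.le_ceil _
          _ ≤ (N : ℝ) := by exact_mod_cast Nat.cast_le.mpr (le_max_right _ _)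
      have hkey : (1 : ℝ) < ((N : ℝ) + 1) * (2⁻¹ * β.toReal) := by
        have h2 : 2 ≤ (N : ℝ) * β.toReal := by
          rw [div_le_iff₀ hβR] at hNR
          linarith
        nlinarith
      have e1 : ((N : ℝ≥0∞) + 1) * (2⁻¹ * β) = ENNReal.ofReal (((N : ℝ) + 1) * (2⁻¹ * β.toReal)) := by
        rw [ENNReal.ofReal_mul (by positivity), ENNReal.ofReal_mul (by norm_num)]
        congr 1
        · rw [show ((N : ℝ) + 1) = ((N + 1 : ℕ) : ℝ) by push_cast; ring, ENNReal.ofReal_natCast]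
          push_cast; ring
        · congr 1
          · rw [ENNReal.ofReal_inv_of_pos (by norm_num)]
            norm_num
          · exact (ENNReal.ofReal_toReal hβtop).symm
      rw [e1, ← ENNReal.ofReal_one, ENNReal.ofReal_lt_ofReal_iff
        (mul_pos (by positivity) (mul_pos (by norm_num) hβR))]
      exact hkey
    exact (not_lt.mpr hsum) hgt
  -- take the minimal contraction step
  set n := Nat.find hexists with hndef
  have hn : d (n + 1) ≤ r * d n := Nat.find_spec hexists
  have hpos : ∀ m, m ≤ n → r ^ m * d 0 ≤ d m := by
    intro m hm
    induction m with
    | zero => simpa using le_rfl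
    | succ m ih =>
        have hmn : m < n := Nat.lt_of_succ_le hm
        have h1 : r * d m < d (m + 1) := by
          have := Nat.find_min hexists hmn
          exact not_le.mp (by simpa [hndef] using this)
        calc r ^ (m + 1) * d 0 = r * (r ^ m * d 0) := by ring
          _ ≤ r * d m := mul_le_mul_right (ih hmn.le) r
          _ ≤ d (m + 1) := h1.le
  have hdn0 : d n ≠ 0 := by
    intro h0
    have h1 := hpos n le_rfl
    rw [h0] at h1
    have : r ^ n * d 0 ≠ 0 :=
      mul_ne_zero (pow_ne_zero n hr0.ne') (fun h => hβ0.ne' (le_antisymm (h ▸ hdlow) (zero_le)))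
    exact this (le_antisymm h1 (zero_le))
  -- conclusion with s₀ = t (n+1)
  refine ⟨t (n + 1), r, β, ?_, ?_, hr1, hβ0, ?_, ?_⟩
  · rw [ht_succ]
    exact hβ0.trans_le le_add_self
  · exact (ht1 (n + 1)).trans_lt hs₁1
  · have h2 : ψ (t (n + 1)) ≤ t (n + 1) := hfix (n + 1)
    rw [hψdef] at h2
    exact h2
  · -- cder bound via the slope inequality
    have hslope := phi_slope μ (hdec n) ((ht1 n).trans hs₁1.le)
    -- cder (t (n+1)) * (t n - t (n+1)) + phi (t (n+1)) ≤ phi (t n)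
    have h3 : cder μ (t (n + 1)) * d n + t (n + 2) ≤ t (n + 1) := by
      have h4 := add_le_add_left hslope β
      rw [add_assoc] at h4
      calc cder μ (t (n + 1)) * d n + t (n + 2)
          = cder μ (t (n + 1)) * (t n - t (n + 1)) + (phi μ (t (n + 1)) + β) := by
            rw [ht_succ (n + 1)]
        _ ≤ phi μ (t n) + β := h4
        _ = t (n + 1) := (ht_succ n).symm
    have h5 : cder μ (t (n + 1)) * d n + t (n + 2) ≤ d (n + 1) + t (n + 2) := by
      rw [hdcancel (n + 1)]
      exact h3
    have h6 : cder μ (t (n + 1)) * d n ≤ d (n + 1) :=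
      le_of_add_le_add_right' (httop (n + 2)) h5
    have h7 : cder μ (t (n + 1)) * d n ≤ r * d n := h6.trans hn
    exact (ENNReal.mul_le_mul_iff_left hdn0 (hdtop n)).mp h7

end
end GWaux

namespace GWaux
open ENNReal
noncomputable section

lemma uniform_params (μ₁ : PMF ℕ) (h1 : 1 < mMean μ₁) :
    ∃ δ : ℝ, 0 < δ ∧ ∃ s₀ c : ℝ≥0∞, 0 < s₀ ∧ s₀ < 1 ∧ c < 1 ∧
      ∀ μ₂ : PMF ℕ, dTV μ₁ μ₂ ≤ δ → phi μ₂ s₀ ≤ s₀ ∧ cder μ₂ s₀ ≤ c := by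
  obtain ⟨s₁, α, _, hs₁1, hα, hphi⟩ := exists_s1 μ₁ h1
  obtain ⟨s₀, c₀, β, hs₀0, hs₀1, hc₀1, hβ0, hmargin, hcder⟩ := exists_s0 μ₁ hs₁1 hα hphi
  have hs₀top : s₀ ≠ ∞ := (hs₀1.trans one_lt_top).ne
  have h1s₀ : (1 : ℝ≥0∞) - s₀ ≠ 0 := by simpa [tsub_eq_zero_iff_le, not_le] using hs₀1
  have h1s₀top : (1 : ℝ≥0∞) - s₀ ≠ ∞ := ENNReal.sub_ne_top one_ne_top
  have hc₀top : c₀ ≠ ∞ := (hc₀1.trans one_lt_top).ne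
  have h1c₀ : (1 : ℝ≥0∞) - c₀ ≠ 0 := by simpa [tsub_eq_zero_iff_le, not_le] using hc₀1
  set γ := (1 - c₀) / 2 with hγdef
  have hγ0 : γ ≠ 0 := (ENNReal.div_pos h1c₀ ENNReal.ofNat_ne_top).ne'
  have hc1 : c₀ + γ < 1 := by
    calc c₀ + γ < c₀ + (1 - c₀) :=
          ENNReal.add_lt_add_left hc₀top (ENNReal.half_lt_self h1c₀ (ENNReal.sub_ne_top one_ne_top))
      _ = 1 := add_tsub_cancel_of_le hc₀1.le
  have hβtop : β ≠ ∞ := ((le_add_self.trans hmargin).trans_lt (hs₀1.trans one_lt_top)).ne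
  set m := min β (γ * (1 - s₀)) with hmdef
  have hm0 : m ≠ 0 := (lt_min hβ0 (ENNReal.mul_pos hγ0 h1s₀)).ne'
  have hmtop : m ≠ ∞ := ne_top_of_le_ne_top hβtop (min_le_left _ _)
  set δ := m.toReal / 4 with hδdef
  have hδ0 : 0 < δ := by
    have := ENNReal.toReal_pos hm0 hmtop
    positivity
  have hE : ENNReal.ofReal (2 * δ) ≤ m := by
    have h2 : 2 * δ ≤ m.toReal := by
      rw [hδdef]
      have := ENNReal.toReal_nonneg (a := m)
      linarith
    calc ENNReal.ofReal (2 * δ) ≤ ENNReal.ofReal m.toReal := ENNReal.ofReal_le_ofReal h2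
      _ = m := ENNReal.ofReal_toReal hmtop
  refine ⟨δ, hδ0, s₀, c₀ + γ, hs₀0, hs₀1, hc1, fun μ₂ hTV => ⟨?_, ?_⟩⟩
  · calc phi μ₂ s₀ ≤ phi μ₁ s₀ + ENNReal.ofReal (2 * δ) := phi_perturb hTV hs₀1.le
      _ ≤ phi μ₁ s₀ + β := add_le_add_right (hE.trans (min_le_left _ _)) _
      _ ≤ s₀ := hmargin
  · calc cder μ₂ s₀ ≤ cder μ₁ s₀ + (1 - s₀)⁻¹ * ENNReal.ofReal (2 * δ) :=
          cder_perturb hTV hs₀1.le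
      _ ≤ c₀ + (1 - s₀)⁻¹ * (γ * (1 - s₀)) :=
          add_le_add hcder (mul_le_mul_right (hE.trans (min_le_right _ _)) _)
      _ = c₀ + γ := by
          rw [mul_comm γ, ← mul_assoc, ENNReal.inv_mul_cancel h1s₀ h1s₀top, one_mul]

end
end GWaux


/-- Lemma 3.3(i): locally uniformly in `μ₂`, the conditional probability
`ℙ^{μ₂}[Z_n = k | Z_n > 0]` becomes small for large `n`. -/
theorem conditional_gen_size_small_local
    (P : PMF ℕ → Measure GWOmega) (hP : ∀ μ, IsGWMeasure (P μ) μ)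
    (N : Set (PMF ℕ)) (hN : N ⊆ N11) (hint : LocUnifIntegrating N)
    (hm : ∀ μ ∈ N, 1 < mReal μ) :
    ∀ μ₁ ∈ N, ∀ k : ℕ, 1 ≤ k → ∀ ε > (0 : ℝ), ∃ δ > (0 : ℝ), ∃ n₀ : ℕ,
      ∀ μ₂ ∈ N, dTV μ₁ μ₂ ≤ δ → ∀ n, n₀ ≤ n →
        condProb (P μ₂) {ω | Z n ω = k} {ω | 0 < Z n ω} ≤ ENNReal.ofReal ε := by
  intro μ₁ hμ₁ k hk ε hε
  classical
  have hfin : mMean μ₁ < ⊤ := hN hμ₁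
  have h1 : 1 < mMean μ₁ := by
    have h2 := hm μ₁ hμ₁
    rw [mReal] at h2
    by_contra hle
    push_neg at hle
    have h3 : (mMean μ₁).toReal ≤ 1 := by
      calc (mMean μ₁).toReal ≤ (1 : ℝ≥0∞).toReal := ENNReal.toReal_mono one_ne_top hle
        _ = 1 := ENNReal.toReal_one
    linarith
  obtain ⟨δ, hδ0, s₀, c, hs₀0, hs₀1, hc1, hball⟩ := GWaux.uniform_params μ₁ h1
  have hs₀top : s₀ ≠ ∞ := (hs₀1.trans one_lt_top).ne
  have h1s₀ : (1 : ℝ≥0∞) - s₀ ≠ 0 := by simpa [tsub_eq_zero_iff_le, not_le] using hs₀1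
  have hTpos : 0 < ENNReal.ofReal ε * ((1 - s₀) * s₀ ^ k) := by
    refine ENNReal.mul_pos (ENNReal.ofReal_pos.mpr hε).ne' ?_
    exact (ENNReal.mul_pos h1s₀ (pow_ne_zero k hs₀0.ne')).ne'
  have htend : Filter.Tendsto (fun n : ℕ => c ^ n) Filter.atTop (nhds 0) := by
    refine ENNReal.tendsto_atTop_zero_of_tsum_ne_top ?_
    rw [ENNReal.tsum_geometric]
    simp only [ne_eq, ENNReal.inv_eq_top]
    simpa [tsub_eq_zero_iff_le, not_le] using hc1
  obtain ⟨n₀, hn₀⟩ := Filter.eventually_atTop.mp (htend.eventually_lt_const hTpos)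
  refine ⟨δ, hδ0, n₀, fun μ₂ hμ₂ hTV n hn => ?_⟩
  obtain ⟨hphi₂, hcder₂⟩ := hball μ₂ hTV
  have hPμ := hP μ₂
  haveI hprob : IsProbabilityMeasure (P μ₂) := hPμ.1
  set φ := GWaux.phi μ₂ with hφdef
  set u : ℕ → ℝ≥0∞ := fun j => φ^[j] s₀ with hudef
  set v : ℕ → ℝ≥0∞ := fun j => φ^[j] (0 : ℝ≥0∞) with hvdef
  have hu_succ : ∀ j, u (j + 1) = φ (u j) := fun j => Function.iterate_succ_apply' φ j s₀
  have hv_succ : ∀ j, v (j + 1) = φ (v j) := fun j => Function.iterate_succ_apply' φ j 0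
  have hus₀ : ∀ j, u j ≤ s₀ := by
    intro j
    induction j with
    | zero => exact le_rfl
    | succ j ih =>
        rw [hu_succ]
        exact (GWaux.phi_mono μ₂ ih).trans hphi₂
  have huv : ∀ j, v j ≤ u j := by
    intro j
    induction j with
    | zero => exact zero_le
    | succ j ih =>
        rw [hu_succ, hv_succ]
        exact GWaux.phi_mono μ₂ ih
  have hvtop : ∀ j, v j ≠ ∞ := fun j =>
    (((huv j).trans (hus₀ j)).trans_lt (hs₀1.trans one_lt_top)).ne
  have hcontr : ∀ j, u j ≤ v j + c ^ j := by
    intro j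
    induction j with
    | zero =>
        simp only [Function.iterate_zero, id_eq, pow_zero]
        calc u 0 = s₀ := rfl
          _ ≤ 1 := hs₀1.le
          _ ≤ v 0 + 1 := le_add_self
    | succ j ih =>
        have hlip := GWaux.phi_lipschitz μ₂ (huv j) (hus₀ j) hs₀1.le
        have hsub : u j - v j ≤ c ^ j := tsub_le_iff_left.mpr ih
        calc u (j + 1) = φ (u j) := hu_succ j
          _ ≤ φ (v j) + (u j - v j) * GWaux.cder μ₂ s₀ := hlip
          _ ≤ φ (v j) + c ^ j * c := add_le_add_right (mul_le_mul' hsub hcder₂) _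
          _ = v (j + 1) + c ^ (j + 1) := by rw [hv_succ, pow_succ]
  have hFs : GWaux.Fgen (P μ₂) n s₀ = u n := GWaux.Fgen_iterate hPμ n s₀
  have hFv : GWaux.Fgen (P μ₂) n 0 = v n := GWaux.Fgen_iterate hPμ n 0
  have hv_eq : P μ₂ (Z n ⁻¹' {0}) = v n := by
    rw [← hFv, GWaux.Fgen_eq_tsum]
    rw [tsum_eq_single 0]
    · rw [pow_zero, mul_one]
    · intro j hj
      rw [zero_pow hj, mul_zero]
  have hk0 : k ≠ 0 := by omega
  have hnum : P μ₂ (Z n ⁻¹' {k}) * s₀ ^ k + P μ₂ (Z n ⁻¹' {0}) ≤ u n := by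
    rw [← hFs, GWaux.Fgen_eq_tsum]
    have hsum : ∑ j ∈ ({k, 0} : Finset ℕ), P μ₂ (Z n ⁻¹' {j}) * s₀ ^ j
        ≤ ∑' j : ℕ, P μ₂ (Z n ⁻¹' {j}) * s₀ ^ j :=
      Summable.sum_le_tsum _ (fun _ _ => zero_le) ENNReal.summable
    rw [Finset.sum_pair hk0] at hsum
    simpa using hsum
  have hkey : P μ₂ (Z n ⁻¹' {k}) * s₀ ^ k ≤ c ^ n := by
    have h6 : P μ₂ (Z n ⁻¹' {k}) * s₀ ^ k + v n ≤ v n + c ^ n := by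
      calc P μ₂ (Z n ⁻¹' {k}) * s₀ ^ k + v n
          = P μ₂ (Z n ⁻¹' {k}) * s₀ ^ k + P μ₂ (Z n ⁻¹' {0}) := by rw [hv_eq]
        _ ≤ u n := hnum
        _ ≤ v n + c ^ n := hcontr n
    rw [add_comm (v n) (c ^ n)] at h6
    exact GWaux.le_of_add_le_add_right' (hvtop n) h6
  have hmeasZ0 : MeasurableSet (Z n ⁻¹' {0}) := GWaux.measurable_Z n (measurableSet_singleton 0)
  have hden : 1 - s₀ ≤ P μ₂ {ω | 0 < Z n ω} := by
    have hset : {ω : GWOmega | 0 < Z n ω} = (Z n ⁻¹' {0})ᶜ := by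
      ext ω; simp [Nat.pos_iff_ne_zero]
    rw [hset, prob_compl_eq_one_sub hmeasZ0]
    refine tsub_le_tsub_left ?_ 1
    rw [hv_eq]
    exact (huv n).trans (hus₀ n)
  have hAne : P μ₂ {ω | 0 < Z n ω} ≠ 0 := by
    intro h0
    rw [h0] at hden
    exact h1s₀ (le_antisymm hden (zero_le))
  have hAtop : P μ₂ {ω | 0 < Z n ω} ≠ ∞ := measure_ne_top _ _
  have hsetk : {ω : GWOmega | Z n ω = k} = Z n ⁻¹' {k} := rfl
  have hfinal : P μ₂ {ω | Z n ω = k} ≤ ENNReal.ofReal ε * P μ₂ {ω | 0 < Z n ω} := by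
    have h7 : P μ₂ {ω | Z n ω = k} * s₀ ^ k
        ≤ (ENNReal.ofReal ε * P μ₂ {ω | 0 < Z n ω}) * s₀ ^ k := by
      calc P μ₂ {ω | Z n ω = k} * s₀ ^ k ≤ c ^ n := hsetk ▸ hkey
        _ ≤ ENNReal.ofReal ε * ((1 - s₀) * s₀ ^ k) := (hn₀ n hn).le
        _ ≤ ENNReal.ofReal ε * (P μ₂ {ω | 0 < Z n ω} * s₀ ^ k) :=
            mul_le_mul_right (mul_le_mul_left hden _) _
        _ = (ENNReal.ofReal ε * P μ₂ {ω | 0 < Z n ω}) * s₀ ^ k := by ring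
    exact (ENNReal.mul_le_mul_iff_left (pow_ne_zero k hs₀0.ne') (ENNReal.pow_ne_top hs₀top)).mp h7
  have hinter : {ω : GWOmega | Z n ω = k} ∩ {ω | 0 < Z n ω} = {ω | Z n ω = k} := by
    apply Set.inter_eq_self_of_subset_left
    intro ω hω
    simp only [Set.mem_setOf_eq] at *
    omega
  rw [condProb, hinter]
  rw [ENNReal.div_le_iff_le_mul (Or.inl hAne) (Or.inl hAtop)]
  exact hfinal
end

section
/- For every μ₁ ∈ 𝒩₁¹ with m_{μ₁} > 1 and every ε > 0 there is a δ > 0 such that for all μ₂ ∈ 𝒩₁¹ with d_TV(μ₁,μ₂) ≤ δ one has |ℙ^{μ₁}[Z_n = 0] − ℙ^{μ₂}[Z_n = 0]| ≤ ε for all n ∈ ℕ. -/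
open MeasureTheory ProbabilityTheory ENNReal Metric

namespace GWAux

open MeasureTheory ProbabilityTheory ENNReal Set

noncomputable section

/-- comap σ-algebra of one coordinate -/
def Mc (ki : ℕ × ℕ) : MeasurableSpace GWOmega :=
  MeasurableSpace.comap (fun ω : GWOmega => ω ki) inferInstance

lemma Mc_le (ki : ℕ × ℕ) : Mc ki ≤ (inferInstance : MeasurableSpace GWOmega) :=
  (measurable_pi_apply ki).comap_le

/-- σ-algebra generated by a set of coordinates -/
def MS (t : Set (ℕ × ℕ)) : MeasurableSpace GWOmega := ⨆ ki ∈ t, Mc ki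

lemma MS_le (t : Set (ℕ × ℕ)) : MS t ≤ (inferInstance : MeasurableSpace GWOmega) :=
  iSup₂_le fun ki _ => Mc_le ki

lemma measurable_eval_MS {t : Set (ℕ × ℕ)} {ki : ℕ × ℕ} (h : ki ∈ t) :
    Measurable[MS t] (fun ω : GWOmega => ω ki) := by
  have : Mc ki ≤ MS t := le_biSup _ h
  exact (Measurable.of_comap_le le_rfl).mono this le_rfl

lemma meas_sum {m : MeasurableSpace GWOmega} {N : GWOmega → ℕ} {n : ℕ}
    (hN : Measurable[m] N) (he : ∀ i, Measurable[m] (fun ω : GWOmega => ω (n, i))) :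
    Measurable[m] (fun ω => ∑ i ∈ Finset.range (N ω), ω (n, i)) := by
  apply measurable_to_countable'
  intro j
  have : (fun ω => ∑ i ∈ Finset.range (N ω), ω (n, i)) ⁻¹' {j} =
      ⋃ k : ℕ, (N ⁻¹' {k}) ∩ ((fun ω => ∑ i ∈ Finset.range k, ω (n, i)) ⁻¹' {j}) := by
    ext ω
    simp only [mem_preimage, mem_singleton_iff, mem_iUnion, mem_inter_iff]
    constructor
    · intro h; exact ⟨N ω, rfl, h⟩
    · rintro ⟨k, rfl, h⟩; exact h
  rw [this]
  refine MeasurableSet.iUnion fun k => (hN (measurableSet_singleton k)).inter ?_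
  exact (Finset.measurable_sum _ fun i _ => he i) (measurableSet_singleton j)

lemma measZ_MS (n : ℕ) : Measurable[MS {p : ℕ × ℕ | p.1 < n}] (Z n) := by
  induction n with
  | zero => exact measurable_const
  | succ n ih =>
    have hsub : MS {p : ℕ × ℕ | p.1 < n} ≤ MS {p : ℕ × ℕ | p.1 < n + 1} := by
      refine iSup₂_le fun ki hki => le_biSup _ (by exact Nat.lt_succ_of_lt hki)
    have hN : Measurable[MS {p : ℕ × ℕ | p.1 < n + 1}] (Z n) := ih.mono hsub le_rfl
    show Measurable[MS {p : ℕ × ℕ | p.1 < n + 1}]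
      (fun ω => ∑ i ∈ Finset.range (Z n ω), ω (n, i))
    exact meas_sum hN fun i => measurable_eval_MS (by simp)

lemma measZ (n : ℕ) : Measurable (Z n) := (measZ_MS n).mono (MS_le _) le_rfl

end

end GWAux
namespace GWAux

open MeasureTheory ProbabilityTheory ENNReal Set

noncomputable section

/-- ENNReal generating function -/
def fE (μ : PMF ℕ) (s : ℝ≥0∞) : ℝ≥0∞ := ∑' k : ℕ, s ^ k * μ k

lemma lintegral_nat_decomp (P : Measure GWOmega) {N : GWOmega → ℕ} (hN : Measurable N)
    {F : ℕ → GWOmega → ℝ≥0∞} (hF : ∀ k, Measurable (F k)) :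
    ∫⁻ ω, F (N ω) ω ∂P = ∑' k : ℕ, ∫⁻ ω, (N ⁻¹' {k}).indicator (F k) ω ∂P := by
  rw [← lintegral_tsum fun k =>
    ((hF k).indicator (hN (measurableSet_singleton k))).aemeasurable]
  congr 1
  funext ω
  have : ∀ b : ℕ, b ≠ N ω → (N ⁻¹' {b}).indicator (F b) ω = 0 := fun b hb =>
    indicator_of_notMem (by simpa using hb.symm) _
  rw [tsum_eq_single (N ω) this, indicator_of_mem (show ω ∈ N ⁻¹' {N ω} from rfl)]

lemma lintegral_pow_nat (P : Measure GWOmega) {N : GWOmega → ℕ} (hN : Measurable N)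
    (c : ℝ≥0∞) :
    ∫⁻ ω, c ^ N ω ∂P = ∑' k : ℕ, P (N ⁻¹' {k}) * c ^ k := by
  rw [lintegral_nat_decomp P hN (F := fun k _ => c ^ k) (fun k => measurable_const)]
  congr 1
  funext k
  rw [lintegral_indicator_const (hN (measurableSet_singleton k)), mul_comm]

end

end GWAux
namespace GWAux

open MeasureTheory ProbabilityTheory ENNReal Set

noncomputable section

variable {P : Measure GWOmega} {μ : PMF ℕ}

lemma iIndep_Mc (h : IsGWMeasure P μ) : iIndep Mc P := by
  have := h.2.1
  rwa [iIndepFun_iff_iIndep] at this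

lemma lintegral_pow_eval (h : IsGWMeasure P μ) (s : ℝ≥0∞) (ki : ℕ × ℕ) :
    ∫⁻ ω, s ^ ω ki ∂P = fE μ s := by
  have hmeas : Measurable (fun m : ℕ => s ^ m) := measurable_from_top
  rw [← lintegral_map hmeas (measurable_pi_apply ki), h.2.2 ki, lintegral_countable']
  unfold fE
  congr 1
  funext k
  rw [PMF.toMeasure_apply_singleton _ _ (measurableSet_singleton k)]

lemma indep_MS_compl (h : IsGWMeasure P μ) (t : Set (ℕ × ℕ)) :
    Indep (MS t) (MS tᶜ) P :=
  indep_iSup_of_disjoint (fun ki => Mc_le ki) (iIndep_Mc h) disjoint_compl_right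

/-- integral of a product of an MS t indicator and an MS tᶜ function -/
lemma lintegral_indicator_indep (h : IsGWMeasure P μ) {t : Set (ℕ × ℕ)}
    {A : Set GWOmega} (hA : MeasurableSet[MS t] A) {g : GWOmega → ℝ≥0∞}
    (hg : Measurable[MS tᶜ] g) :
    ∫⁻ ω, A.indicator g ω ∂P = P A * ∫⁻ ω, g ω ∂P := by
  have hf : Measurable[MS t] (A.indicator (fun _ => (1 : ℝ≥0∞))) :=
    measurable_const.indicator hA
  have key := lintegral_mul_eq_lintegral_mul_lintegral_of_independent_measurableSpace
    (MS_le t) (MS_le tᶜ) (indep_MS_compl h t) hf hg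
  have h1 : ∫⁻ ω, A.indicator (fun _ => (1 : ℝ≥0∞)) ω ∂P = P A := by
    rw [lintegral_indicator_const (MS_le t _ hA), one_mul]
  have h2 : (fun ω => A.indicator (fun _ => (1 : ℝ≥0∞)) ω * g ω) = A.indicator g := by
    funext ω
    by_cases hω : ω ∈ A
    · simp [indicator_of_mem hω]
    · simp [indicator_of_notMem hω]
  calc ∫⁻ ω, A.indicator g ω ∂P
      = ∫⁻ ω, (A.indicator (fun _ => (1:ℝ≥0∞)) * g) ω ∂P := by rw [← h2]; rfl
    _ = (∫⁻ ω, A.indicator (fun _ => (1:ℝ≥0∞)) ω ∂P) * ∫⁻ ω, g ω ∂P := key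
    _ = P A * ∫⁻ ω, g ω ∂P := by rw [h1]

lemma lintegral_row (h : IsGWMeasure P μ) (s : ℝ≥0∞) (n : ℕ) (k : ℕ) :
    ∫⁻ ω, s ^ (∑ i ∈ Finset.range k, ω (n, i)) ∂P = (fE μ s) ^ k := by
  haveI := h.1
  induction k with
  | zero => simp
  | succ k ih =>
    set t : Set (ℕ × ℕ) := {p : ℕ × ℕ | p.1 = n ∧ p.2 < k} with ht
    have hf : Measurable[MS t] (fun ω : GWOmega => s ^ (∑ i ∈ Finset.range k, ω (n, i))) := by
      refine (measurable_from_top (f := fun m : ℕ => s ^ m)).comp ?_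
      exact Finset.measurable_sum _ fun i hi =>
        measurable_eval_MS (by simp [ht, Finset.mem_range.mp hi])
    have hg : Measurable[MS tᶜ] (fun ω : GWOmega => s ^ ω (n, k)) := by
      refine (measurable_from_top (f := fun m : ℕ => s ^ m)).comp ?_
      exact measurable_eval_MS (by simp [ht])
    have key := lintegral_mul_eq_lintegral_mul_lintegral_of_independent_measurableSpace
      (MS_le t) (MS_le tᶜ) (indep_MS_compl h t) hf hg
    have heq : (fun ω : GWOmega => s ^ (∑ i ∈ Finset.range (k+1), ω (n, i))) =
        (fun ω : GWOmega => s ^ (∑ i ∈ Finset.range k, ω (n, i))) *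
          fun ω : GWOmega => s ^ ω (n, k) := by
      funext ω
      simp [Finset.sum_range_succ, pow_add]
    rw [heq]
    rw [show lintegral P ((fun ω : GWOmega => s ^ (∑ i ∈ Finset.range k, ω (n, i))) *
        fun ω : GWOmega => s ^ ω (n, k)) = _ from key, ih,
      lintegral_pow_eval h s (n, k), pow_succ]

end

end GWAux
namespace GWAux

open MeasureTheory ProbabilityTheory ENNReal Set

noncomputable section

variable {P : Measure GWOmega} {μ : PMF ℕ}

lemma GW_iterate (h : IsGWMeasure P μ) (n : ℕ) (s : ℝ≥0∞) :
    ∫⁻ ω, s ^ Z n ω ∂P = (fE μ)^[n] s := by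
  haveI := h.1
  induction n generalizing s with
  | zero =>
    simp only [Z, Function.iterate_zero, id_eq, pow_one]
    rw [lintegral_const, measure_univ, mul_one]
  | succ n ih =>
    have hF : ∀ k : ℕ, Measurable (fun ω : GWOmega => s ^ (∑ i ∈ Finset.range k, ω (n, i))) :=
      fun k => (measurable_from_top (f := fun m : ℕ => s ^ m)).comp
        (Finset.measurable_sum _ fun i _ => measurable_pi_apply _)
    have hZ : (fun ω => s ^ Z (n+1) ω) =
        fun ω => (fun k (ω' : GWOmega) => s ^ (∑ i ∈ Finset.range k, ω' (n, i))) (Z n ω) ω := by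
      funext ω; rfl
    rw [hZ, lintegral_nat_decomp P (measZ n) hF]
    have hterm : ∀ k : ℕ, ∫⁻ ω, (Z n ⁻¹' {k}).indicator
        (fun ω' : GWOmega => s ^ (∑ i ∈ Finset.range k, ω' (n, i))) ω ∂P
        = P (Z n ⁻¹' {k}) * (fE μ s) ^ k := by
      intro k
      have hA : MeasurableSet[MS {p : ℕ × ℕ | p.1 < n}] (Z n ⁻¹' {k}) :=
        measZ_MS n (measurableSet_singleton k)
      have hg : Measurable[MS {p : ℕ × ℕ | p.1 < n}ᶜ]
          (fun ω : GWOmega => s ^ (∑ i ∈ Finset.range k, ω (n, i))) := by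
        refine (measurable_from_top (f := fun m : ℕ => s ^ m)).comp ?_
        exact Finset.measurable_sum _ fun i _ => measurable_eval_MS (by simp)
      rw [lintegral_indicator_indep h hA hg, lintegral_row h s n k]
    simp only [hterm]
    rw [← lintegral_pow_nat P (measZ n) (fE μ s), ih (fE μ s),
      ← Function.iterate_succ_apply]

lemma GW_extinct (h : IsGWMeasure P μ) (n : ℕ) :
    P {ω | Z n ω = 0} = (fE μ)^[n] 0 := by
  rw [← GW_iterate h n 0]
  have hpt : (fun ω => (0:ℝ≥0∞) ^ Z n ω) = ({ω | Z n ω = 0}).indicator (fun _ => 1) := by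
    funext ω
    by_cases hω : Z n ω = 0
    · simp [hω, indicator_of_mem (show ω ∈ {ω | Z n ω = 0} from hω)]
    · rw [zero_pow hω, indicator_of_notMem (by simpa using hω)]
  rw [hpt, lintegral_indicator_const (show MeasurableSet {ω | Z n ω = 0} from
    measZ n (measurableSet_singleton 0)), one_mul]

end

end GWAux
namespace GWAux

open MeasureTheory ProbabilityTheory ENNReal Set

noncomputable section

/-- real generating function -/
def fR (μ : PMF ℕ) (s : ℝ) : ℝ := ∑' k : ℕ, (μ k).toReal * s ^ k

variable {μ : PMF ℕ}

lemma coe_nonneg (k : ℕ) : 0 ≤ (μ k).toReal := ENNReal.toReal_nonneg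

lemma coe_summable : Summable (fun k => (μ k).toReal) :=
  ENNReal.summable_toReal (by rw [PMF.tsum_coe]; exact one_ne_top)

lemma coe_tsum : ∑' k : ℕ, (μ k).toReal = 1 := by
  rw [← ENNReal.tsum_toReal_eq fun k => μ.apply_ne_top k, PMF.tsum_coe, ENNReal.toReal_one]

lemma term_summable {s : ℝ} (hs : s ∈ Icc (0:ℝ) 1) :
    Summable (fun k => (μ k).toReal * s ^ k) := by
  refine Summable.of_nonneg_of_le (fun k => mul_nonneg (coe_nonneg k) (pow_nonneg hs.1 k)) (fun k => ?_) (coe_summable (μ := μ))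
  calc (μ k).toReal * s ^ k ≤ (μ k).toReal * 1 :=
        mul_le_mul_of_nonneg_left (pow_le_one₀ hs.1 hs.2) (coe_nonneg k)
    _ = (μ k).toReal := mul_one _

lemma fR_nonneg {s : ℝ} (hs : s ∈ Icc (0:ℝ) 1) : 0 ≤ fR μ s :=
  tsum_nonneg fun k => by have := hs.1; positivity

lemma fR_le_one {s : ℝ} (hs : s ∈ Icc (0:ℝ) 1) : fR μ s ≤ 1 := by
  rw [← coe_tsum (μ := μ)]
  refine Summable.tsum_le_tsum (fun k => ?_) (term_summable hs) coe_summable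
  calc (μ k).toReal * s ^ k ≤ (μ k).toReal * 1 :=
        mul_le_mul_of_nonneg_left (pow_le_one₀ hs.1 hs.2) (coe_nonneg k)
    _ = (μ k).toReal := mul_one _

lemma fR_mono {x y : ℝ} (hx : x ∈ Icc (0:ℝ) 1) (hy : y ∈ Icc (0:ℝ) 1) (hxy : x ≤ y) :
    fR μ x ≤ fR μ y :=
  Summable.tsum_le_tsum (fun k => mul_le_mul_of_nonneg_left (pow_le_pow_left₀ hx.1 hxy k) (coe_nonneg k))
    (term_summable hx) (term_summable hy)

lemma fR_mem {s : ℝ} (hs : s ∈ Icc (0:ℝ) 1) : fR μ s ∈ Icc (0:ℝ) 1 :=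
  ⟨fR_nonneg hs, fR_le_one hs⟩

lemma fR_convex : ConvexOn ℝ (Icc (0:ℝ) 1) (fR μ) := by
  refine ⟨convex_Icc 0 1, fun x hx y hy a b ha hb hab => ?_⟩
  have hmem : a • x + b • y ∈ Icc (0:ℝ) 1 := (convex_Icc (0:ℝ) 1) hx hy ha hb hab
  have hterm : ∀ k : ℕ, (μ k).toReal * (a • x + b • y) ^ k ≤
      a * ((μ k).toReal * x ^ k) + b * ((μ k).toReal * y ^ k) := by
    intro k
    have hpow := (convexOn_pow (𝕜 := ℝ) k).2 (mem_Ici.mpr hx.1) (mem_Ici.mpr hy.1) ha hb hab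
    have := mul_le_mul_of_nonneg_left hpow (coe_nonneg (μ := μ) k)
    calc (μ k).toReal * (a • x + b • y) ^ k
        ≤ (μ k).toReal * (a • x ^ k + b • y ^ k) := this
      _ = a * ((μ k).toReal * x ^ k) + b * ((μ k).toReal * y ^ k) := by
          simp only [smul_eq_mul]; ring
  have hsum : Summable (fun k : ℕ => a * ((μ k).toReal * x ^ k) +
      b * ((μ k).toReal * y ^ k)) :=
    ((term_summable hx).mul_left a).add ((term_summable hy).mul_left b)
  calc fR μ (a • x + b • y) ≤ ∑' k : ℕ, (a * ((μ k).toReal * x ^ k) +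
        b * ((μ k).toReal * y ^ k)) := Summable.tsum_le_tsum hterm (term_summable hmem) hsum
    _ = a • fR μ x + b • fR μ y := by
        rw [Summable.tsum_add ((term_summable hx).mul_left a) ((term_summable hy).mul_left b),
          tsum_mul_left, tsum_mul_left]; simp [fR, smul_eq_mul]

lemma fR_continuousOn : ContinuousOn (fR μ) (Icc (0:ℝ) 1) := by
  refine continuousOn_tsum (u := fun k => (μ k).toReal)
    (fun k => (continuous_const.mul (continuous_pow k)).continuousOn)
    (coe_summable (μ := μ)) (fun k x hx => ?_)
  rw [Real.norm_eq_abs, abs_mul, abs_of_nonneg (coe_nonneg k), abs_pow]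
  calc (μ k).toReal * |x| ^ k ≤ (μ k).toReal * 1 :=
        mul_le_mul_of_nonneg_left (pow_le_one₀ (abs_nonneg x) (abs_le.mpr ⟨by linarith [hx.1], hx.2⟩)) (coe_nonneg k)
    _ = (μ k).toReal := mul_one _

/-- bridge between fE and fR -/
lemma fE_le_one {t : ℝ≥0∞} (ht : t ≤ 1) : fE μ t ≤ 1 := by
  calc fE μ t ≤ ∑' k : ℕ, μ k := by
        refine ENNReal.tsum_le_tsum fun k => ?_
        calc t ^ k * μ k ≤ 1 ^ k * μ k := by gcongr
          _ = μ k := by rw [one_pow, one_mul]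
    _ = 1 := PMF.tsum_coe μ

lemma fE_toReal {t : ℝ≥0∞} (ht : t ≤ 1) : (fE μ t).toReal = fR μ t.toReal := by
  have hne : ∀ k : ℕ, t ^ k * μ k ≠ ∞ :=
    fun k => ENNReal.mul_ne_top (pow_ne_top (ne_top_of_le_ne_top one_ne_top ht)) (μ.apply_ne_top k)
  rw [fE, ENNReal.tsum_toReal_eq hne]
  unfold fR
  congr 1
  funext k
  rw [ENNReal.toReal_mul, ENNReal.toReal_pow, mul_comm]

lemma iter_bridge (μ : PMF ℕ) (n : ℕ) :
    ((fE μ)^[n] 0).toReal = (fR μ)^[n] 0 ∧ (fE μ)^[n] 0 ≤ 1 := by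
  induction n with
  | zero => simp
  | succ n ih =>
    rw [Function.iterate_succ_apply', Function.iterate_succ_apply']
    exact ⟨by rw [fE_toReal ih.2, ih.1], fE_le_one ih.2⟩

end

end GWAux
namespace GWAux

open MeasureTheory ProbabilityTheory ENNReal Set Filter

noncomputable section

lemma abs_diff_summable (μ1 μ2 : PMF ℕ) :
    Summable (fun k => |(μ1 k).toReal - (μ2 k).toReal|) := by
  refine Summable.of_nonneg_of_le (fun k => abs_nonneg _) (fun k => ?_)
    ((coe_summable (μ := μ1)).add (coe_summable (μ := μ2)))
  calc |(μ1 k).toReal - (μ2 k).toReal| ≤ |(μ1 k).toReal| + |(μ2 k).toReal| := abs_sub _ _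
    _ = (μ1 k).toReal + (μ2 k).toReal := by
        rw [abs_of_nonneg ENNReal.toReal_nonneg, abs_of_nonneg ENNReal.toReal_nonneg]

lemma fR_dTV_bound (μ1 μ2 : PMF ℕ) {s : ℝ} (hs : s ∈ Icc (0:ℝ) 1) :
    |fR μ1 s - fR μ2 s| ≤ 2 * dTV μ1 μ2 := by
  have h2 : 2 * dTV μ1 μ2 = ∑' k : ℕ, |(μ1 k).toReal - (μ2 k).toReal| := by
    rw [dTV]; ring
  rw [h2]
  have hsub : fR μ1 s - fR μ2 s =
      ∑' k : ℕ, ((μ1 k).toReal * s ^ k - (μ2 k).toReal * s ^ k) := by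
    rw [fR, fR, ← Summable.tsum_sub (term_summable hs) (term_summable hs)]
  rw [hsub]
  have habs : Summable (fun k : ℕ => |(μ1 k).toReal * s ^ k - (μ2 k).toReal * s ^ k|) := by
    refine Summable.of_nonneg_of_le (fun k => abs_nonneg _) (fun k => ?_) (abs_diff_summable μ1 μ2)
    rw [← sub_mul, abs_mul, abs_pow, abs_of_nonneg hs.1]
    calc |(μ1 k).toReal - (μ2 k).toReal| * s ^ k
        ≤ |(μ1 k).toReal - (μ2 k).toReal| * 1 := by
          gcongr; exact pow_le_one₀ hs.1 hs.2
      _ = _ := mul_one _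
  calc |∑' k : ℕ, ((μ1 k).toReal * s ^ k - (μ2 k).toReal * s ^ k)|
      ≤ ∑' k : ℕ, |(μ1 k).toReal * s ^ k - (μ2 k).toReal * s ^ k| := by
        have := norm_tsum_le_tsum_norm
          (f := fun k : ℕ => (μ1 k).toReal * s ^ k - (μ2 k).toReal * s ^ k)
          (by simpa [Real.norm_eq_abs] using habs)
        simpa [Real.norm_eq_abs] using this
    _ ≤ ∑' k : ℕ, |(μ1 k).toReal - (μ2 k).toReal| := by
        refine Summable.tsum_le_tsum (fun k => ?_) habs (abs_diff_summable μ1 μ2)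
        rw [← sub_mul, abs_mul, abs_pow, abs_of_nonneg hs.1]
        calc |(μ1 k).toReal - (μ2 k).toReal| * s ^ k
            ≤ |(μ1 k).toReal - (μ2 k).toReal| * 1 := by
              gcongr; exact pow_le_one₀ hs.1 hs.2
          _ = _ := mul_one _

lemma exists_b {μ1 : PMF ℕ} (h1 : mMean μ1 ≠ ⊤) (hm : 1 < mReal μ1) :
    ∃ b, b ∈ Ioo (0:ℝ) 1 ∧ fR μ1 b < b := by
  -- the real mean as a sum
  have hterm_ne : ∀ k : ℕ, (k : ℝ≥0∞) * μ1 k ≠ ⊤ :=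
    fun k => ne_top_of_le_ne_top h1 (ENNReal.le_tsum k)
  have hmr : mReal μ1 = ∑' k : ℕ, (k : ℝ) * (μ1 k).toReal := by
    rw [mReal, mMean, ENNReal.tsum_toReal_eq hterm_ne]
    congr 1; funext k; simp [ENNReal.toReal_mul]
  have hsum : Summable (fun k : ℕ => (k : ℝ) * (μ1 k).toReal) := by
    have := ENNReal.summable_toReal h1
    convert this using 2 with k
    simp [ENNReal.toReal_mul]
  have htend : Tendsto (fun K => ∑ k ∈ Finset.range K, (k : ℝ) * (μ1 k).toReal)
      atTop (nhds (mReal μ1)) := by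
    rw [hmr]; exact hsum.hasSum.tendsto_sum_nat
  obtain ⟨K, hK⟩ := (htend.eventually (lt_mem_nhds hm)).exists
  set M := ∑ k ∈ Finset.range K, (k : ℝ) * (μ1 k).toReal with hM
  -- choose b close to 1
  have hcont : Tendsto (fun s : ℝ => s ^ K * M) (nhdsWithin 1 (Iio 1)) (nhds M) := by
    have : Tendsto (fun s : ℝ => s ^ K * M) (nhds 1) (nhds (1 ^ K * M)) :=
      ((continuous_pow K).mul continuous_const).tendsto 1
    rw [one_pow, one_mul] at this
    exact this.mono_left nhdsWithin_le_nhds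
  have hev : ∀ᶠ s in nhdsWithin (1:ℝ) (Iio 1), 1 < s ^ K * M :=
    hcont.eventually (lt_mem_nhds hK)
  have hev2 : ∀ᶠ s in nhdsWithin (1:ℝ) (Iio 1), s ∈ Ioo (0:ℝ) 1 :=
    Ioo_mem_nhdsLT_of_mem (⟨zero_lt_one, le_rfl⟩ : (1:ℝ) ∈ Ioc (0:ℝ) 1)
  haveI : (nhdsWithin (1:ℝ) (Iio 1)).NeBot := _root_.nhdsLT_neBot 1
  obtain ⟨b, hb1, hb2⟩ := (hev.and hev2).exists
  refine ⟨b, hb2, ?_⟩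
  -- show fR μ1 b < b
  have hbI : b ∈ Icc (0:ℝ) 1 := ⟨le_of_lt hb2.1, le_of_lt hb2.2⟩
  have key : 1 - b < 1 - fR μ1 b := by
    have hgeom : ∀ k : ℕ, k < K → (k : ℝ) * b ^ K * (1 - b) ≤ 1 - b ^ k := by
      intro k hk
      have hgs : 1 - b ^ k = (1 - b) * ∑ j ∈ Finset.range k, b ^ j := by
        have h := geom_sum_mul b k
        linear_combination h
      rw [hgs]
      have hb0 : (0:ℝ) ≤ b := hbI.1
      have hjb : ∀ j ∈ Finset.range k, b ^ K ≤ b ^ j := by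
        intro j hj
        exact pow_le_pow_of_le_one hb0 hbI.2 (le_of_lt (lt_trans (Finset.mem_range.mp hj) hk))
      have hcard := Finset.card_nsmul_le_sum (Finset.range k) (fun j => b ^ j) (b ^ K) hjb
      rw [Finset.card_range, nsmul_eq_mul] at hcard
      have h1b : (0:ℝ) ≤ 1 - b := by linarith [hb2.2]
      nlinarith
    have hlow : (1 - b) * (b ^ K * M) ≤ 1 - fR μ1 b := by
      have hone : (1:ℝ) = ∑' k : ℕ, (μ1 k).toReal := (coe_tsum (μ := μ1)).symm
      have hdiff : 1 - fR μ1 b = ∑' k : ℕ, ((μ1 k).toReal - (μ1 k).toReal * b ^ k) := by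
        rw [Summable.tsum_sub (coe_summable (μ := μ1)) (term_summable hbI), ← hone, fR]
      rw [hdiff]
      have hpart : ∑ k ∈ Finset.range K, ((μ1 k).toReal - (μ1 k).toReal * b ^ k) ≤
          ∑' k : ℕ, ((μ1 k).toReal - (μ1 k).toReal * b ^ k) := by
        refine Summable.sum_le_tsum _ (fun k _ => ?_)
          ((coe_summable (μ := μ1)).sub (term_summable hbI))
        have : b ^ k ≤ 1 := pow_le_one₀ hbI.1 hbI.2
        nlinarith [coe_nonneg (μ := μ1) k]
      refine le_trans ?_ hpart
      calc (1 - b) * (b ^ K * M)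
          = ∑ k ∈ Finset.range K, (1 - b) * (b ^ K * ((k:ℝ) * (μ1 k).toReal)) := by
            rw [hM, Finset.mul_sum, Finset.mul_sum]
        _ ≤ ∑ k ∈ Finset.range K, ((μ1 k).toReal - (μ1 k).toReal * b ^ k) := by
            refine Finset.sum_le_sum (fun k hk => ?_)
            have h1 := hgeom k (Finset.mem_range.mp hk)
            have h2 := coe_nonneg (μ := μ1) k
            nlinarith
    nlinarith [hb2.2]
  linarith

end

end GWAux
namespace GWAux

open MeasureTheory ProbabilityTheory ENNReal Set Filter

noncomputable section

lemma core (μ1 : PMF ℕ) (h1 : mMean μ1 ≠ ⊤) (hm : 1 < mReal μ1) {ε : ℝ} (hε : 0 < ε) :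
    ∃ δ > (0:ℝ), ∀ μ2 : PMF ℕ, dTV μ1 μ2 ≤ δ → ∀ n : ℕ,
      |(fR μ1)^[n] 0 - (fR μ2)^[n] 0| ≤ ε := by
  obtain ⟨b, hbIoo, hfb⟩ := exists_b h1 hm
  have hb0 : 0 < b := hbIoo.1
  have hb1 : b < 1 := hbIoo.2
  have hbI : b ∈ Icc (0:ℝ) 1 := ⟨le_of_lt hb0, le_of_lt hb1⟩
  have hIccsub : Icc (0:ℝ) b ⊆ Icc (0:ℝ) 1 := Icc_subset_Icc le_rfl (le_of_lt hb1)
  -- the fixed point q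
  set g : ℝ → ℝ := fun t => fR μ1 t - t with hgdef
  have hgc : ContinuousOn g (Icc 0 b) :=
    (fR_continuousOn.mono hIccsub).sub continuousOn_id
  set S : Set ℝ := Icc 0 b ∩ g ⁻¹' (Ici 0) with hSdef
  have hSclosed : IsClosed S := hgc.preimage_isClosed_of_isClosed isClosed_Icc isClosed_Ici
  have hS0 : (0:ℝ) ∈ S := by
    refine ⟨⟨le_rfl, le_of_lt hb0⟩, ?_⟩
    have := fR_nonneg (μ := μ1) (s := 0) ⟨le_rfl, zero_le_one⟩
    simp only [mem_preimage, mem_Ici, hgdef]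
    linarith
  have hScomp : IsCompact S :=
    isCompact_Icc.of_isClosed_subset hSclosed inter_subset_left
  set q := sSup S with hqdef
  have hqS : q ∈ S := hScomp.sSup_mem ⟨0, hS0⟩
  have hq0 : (0:ℝ) ≤ q := hqS.1.1
  have hfq_ge : q ≤ fR μ1 q := by have := hqS.2; simp only [mem_preimage, mem_Ici, hgdef] at this; linarith
  have hqb : q < b := by
    rcases lt_or_eq_of_le hqS.1.2 with h|h
    · exact h
    · exfalso; rw [h] at hfq_ge; linarith
  have hqI : q ∈ Icc (0:ℝ) 1 := ⟨hq0, le_trans (le_of_lt hqb) (le_of_lt hb1)⟩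
  have hfq_le : fR μ1 q ≤ q := by
    by_contra hlt
    push_neg at hlt
    have hgq : g b < g q := by simp only [hgdef]; nlinarith
    have hsub2 : Icc q b ⊆ Icc (0:ℝ) b := Icc_subset_Icc hq0 le_rfl
    have hIVT := intermediate_value_Ioo' (le_of_lt hqb) (hgc.mono hsub2)
    have h0mem : (0:ℝ) ∈ Ioo (g b) (g q) := by
      constructor
      · simp only [hgdef]; linarith
      · simp only [hgdef]; linarith
    obtain ⟨t, htIoo, hgt⟩ := hIVT h0mem
    have htS : t ∈ S := by
      refine ⟨⟨le_trans hq0 (le_of_lt htIoo.1), le_of_lt htIoo.2⟩, ?_⟩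
      simp only [mem_preimage, mem_Ici, hgt]; exact le_rfl
    have : t ≤ q := le_csSup hScomp.bddAbove htS
    linarith [htIoo.1]
  have hfq : fR μ1 q = q := le_antisymm hfq_le hfq_ge
  -- choose a ∈ (q, b) with small secant slope
  set φ : ℝ → ℝ := fun t => (fR μ1 b - fR μ1 t) - (b - t) with hφdef
  have hφq : φ q < 0 := by simp only [hφdef]; rw [hfq]; linarith
  have hφc : ContinuousOn φ (Icc 0 b) :=
    (continuousOn_const.sub (fR_continuousOn.mono hIccsub)).sub
      (continuousOn_const.sub continuousOn_id)
  have hqcl : q ∈ closure (Ioo q b) := by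
    rw [closure_Ioo (ne_of_lt hqb)]; exact ⟨le_rfl, le_of_lt hqb⟩
  haveI hNB : (nhdsWithin q (Ioo q b)).NeBot := mem_closure_iff_nhdsWithin_neBot.mp hqcl
  have hsub3 : Ioo q b ⊆ Icc (0:ℝ) b :=
    fun x hx => ⟨le_trans hq0 (le_of_lt hx.1), le_of_lt hx.2⟩
  have htd : Tendsto φ (nhdsWithin q (Ioo q b)) (nhds (φ q)) :=
    (hφc.continuousWithinAt ⟨hq0, le_of_lt hqb⟩).mono_left (nhdsWithin_mono q hsub3)
  have hev : ∀ᶠ x in nhdsWithin q (Ioo q b), φ x < 0 := htd.eventually (eventually_lt_nhds hφq)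
  obtain ⟨a, hφa, haIoo⟩ := (hev.and self_mem_nhdsWithin).exists
  have hqa : q < a := haIoo.1
  have hab : a < b := haIoo.2
  have haI : a ∈ Icc (0:ℝ) 1 := ⟨le_trans hq0 (le_of_lt hqa), le_of_lt (lt_trans hab hb1)⟩
  set L0 := (fR μ1 b - fR μ1 a) / (b - a) with hL0def
  have hL0 : L0 < 1 := by
    rw [hL0def, div_lt_one (by linarith)]
    simp only [hφdef] at hφa; linarith
  set L := max L0 0 with hLdef
  have hL1 : L < 1 := max_lt hL0 zero_lt_one
  have hLnn : 0 ≤ L := le_max_right _ _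
  -- fR μ1 a < a
  have hfa : fR μ1 a < a := by
    have hs := (fR_convex (μ := μ1)).secant_mono hqI haI hbI (ne_of_gt hqa)
      (ne_of_gt (lt_trans hqa hab)) (le_of_lt hab)
    rw [hfq] at hs
    have h2 : (fR μ1 b - q)/(b - q) < 1 := (div_lt_one (by linarith)).mpr (by linarith)
    have h3 := lt_of_le_of_lt hs h2
    have := (div_lt_one (by linarith : (0:ℝ) < a - q)).mp h3
    linarith
  -- Lipschitz estimate on [0,a]
  have hasub : Icc (0:ℝ) a ⊆ Icc (0:ℝ) 1 := Icc_subset_Icc le_rfl haI.2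
  have hlip0 : ∀ x y, x ∈ Icc (0:ℝ) a → y ∈ Icc (0:ℝ) a → x ≤ y →
      fR μ1 y - fR μ1 x ≤ L * (y - x) ∧ 0 ≤ fR μ1 y - fR μ1 x := by
    intro x y hx hy hxy
    have hxI := hasub hx
    have hyI := hasub hy
    refine ⟨?_, sub_nonneg.mpr (fR_mono hxI hyI hxy)⟩
    rcases eq_or_lt_of_le hxy with rfl|hxy'
    · simp
    have hxb : x < b := lt_of_le_of_lt hx.2 hab
    have hyb : y < b := lt_of_le_of_lt hy.2 hab
    have s1 : (fR μ1 y - fR μ1 x)/(y - x) ≤ (fR μ1 b - fR μ1 x)/(b - x) :=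
      (fR_convex (μ := μ1)).secant_mono hxI hyI hbI (ne_of_gt hxy') (ne_of_gt hxb) (le_of_lt hyb)
    have s2 : (fR μ1 x - fR μ1 b)/(x - b) ≤ (fR μ1 a - fR μ1 b)/(a - b) :=
      (fR_convex (μ := μ1)).secant_mono hbI hxI haI (ne_of_lt hxb) (ne_of_lt hab) hx.2
    have e1 : (fR μ1 x - fR μ1 b)/(x - b) = (fR μ1 b - fR μ1 x)/(b - x) := by
      rw [← neg_sub (fR μ1 b) (fR μ1 x), ← neg_sub b x, neg_div_neg_eq]
    have e2 : (fR μ1 a - fR μ1 b)/(a - b) = (fR μ1 b - fR μ1 a)/(b - a) := by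
      rw [← neg_sub (fR μ1 b) (fR μ1 a), ← neg_sub b a, neg_div_neg_eq]
    rw [e1, e2] at s2
    have hslope : (fR μ1 y - fR μ1 x)/(y - x) ≤ L0 := le_trans s1 s2
    have := (div_le_iff₀ (by linarith : (0:ℝ) < y - x)).mp hslope
    have hL0L : L0 * (y - x) ≤ L * (y - x) :=
      mul_le_mul_of_nonneg_right (le_max_left _ _) (by linarith)
    linarith
  have hlip : ∀ x y, x ∈ Icc (0:ℝ) a → y ∈ Icc (0:ℝ) a →
      |fR μ1 x - fR μ1 y| ≤ L * |x - y| := by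
    intro x y hx hy
    rcases le_total x y with hxy|hxy
    · obtain ⟨h1, h2⟩ := hlip0 x y hx hy hxy
      rw [abs_sub_comm, abs_of_nonneg h2, abs_sub_comm x y, abs_of_nonneg (by linarith)]
      exact h1
    · obtain ⟨h1, h2⟩ := hlip0 y x hy hx hxy
      rw [abs_of_nonneg h2, abs_of_nonneg (by linarith)]
      exact h1
  -- the modulus δ
  have hη : 0 < a - fR μ1 a := by linarith
  set δ := min ((a - fR μ1 a)/2) ((1 - L)*ε/2) with hδdef
  have hδpos : 0 < δ := lt_min (by linarith) (div_pos (mul_pos (by linarith) hε) two_pos)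
  refine ⟨δ, hδpos, ?_⟩
  intro μ2 hdTV
  have hclose : ∀ s, s ∈ Icc (0:ℝ) 1 → |fR μ1 s - fR μ2 s| ≤ 2*δ :=
    fun s hs => le_trans (fR_dTV_bound μ1 μ2 hs) (by linarith)
  have h1L : (0:ℝ) < 1 - L := by linarith
  have key : ∀ n : ℕ, (fR μ1)^[n] 0 ∈ Icc (0:ℝ) a ∧ (fR μ2)^[n] 0 ∈ Icc (0:ℝ) a ∧
      |(fR μ1)^[n] 0 - (fR μ2)^[n] 0| ≤ 2*δ/(1-L) := by
    intro n
    induction n with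
    | zero =>
      refine ⟨⟨le_rfl, le_trans hq0 (le_of_lt hqa)⟩, ⟨le_rfl, le_trans hq0 (le_of_lt hqa)⟩, ?_⟩
      simp only [Function.iterate_zero, id_eq, sub_self, abs_zero]
      positivity
    | succ n ih =>
      obtain ⟨hu, hv, he⟩ := ih
      have huI := hasub hu
      have hvI := hasub hv
      rw [Function.iterate_succ_apply', Function.iterate_succ_apply']
      have h2δ : 2*δ ≤ a - fR μ1 a := by
        have := min_le_left ((a - fR μ1 a)/2) ((1 - L)*ε/2); linarith
      set u := (fR μ1)^[n] 0
      set v := (fR μ2)^[n] 0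
      have habs := abs_le.mp (hclose v hvI)
      refine ⟨⟨fR_nonneg huI, ?_⟩, ⟨fR_nonneg hvI, ?_⟩, ?_⟩
      · calc fR μ1 u ≤ fR μ1 a := fR_mono huI haI hu.2
          _ ≤ a := le_of_lt hfa
      · calc fR μ2 v ≤ fR μ1 v + 2*δ := by linarith [habs.1]
          _ ≤ fR μ1 a + 2*δ := by linarith [fR_mono (μ := μ1) hvI haI hv.2]
          _ ≤ a := by linarith
      · calc |fR μ1 u - fR μ2 v|
            ≤ |fR μ1 u - fR μ1 v| + |fR μ1 v - fR μ2 v| := abs_sub_le _ _ _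
          _ ≤ L * |u - v| + 2*δ := add_le_add (hlip u v hu hv) (hclose v hvI)
          _ ≤ L * (2*δ/(1-L)) + 2*δ := by
              have := mul_le_mul_of_nonneg_left he hLnn
              linarith
          _ = 2*δ/(1-L) := by field_simp; ring
  have hfin : 2*δ/(1-L) ≤ ε := by
    rw [div_le_iff₀ h1L]
    have := min_le_right ((a - fR μ1 a)/2) ((1 - L)*ε/2)
    nlinarith
  exact fun n => le_trans (key n).2.2 hfin

end

end GWAux
/-- Lemma 3.4(i): continuity, uniformly in `n`, of `μ ↦ ℙ^μ[Z_n = 0]` at any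
supercritical `μ₁ ∈ 𝒩₁¹`. -/
theorem extinction_time_n_continuous
    (P : PMF ℕ → Measure GWOmega) (hP : ∀ μ, IsGWMeasure (P μ) μ) :
    ∀ μ₁ ∈ N11, 1 < mReal μ₁ → ∀ ε > (0 : ℝ), ∃ δ > (0 : ℝ),
      ∀ μ₂ ∈ N11, dTV μ₁ μ₂ ≤ δ → ∀ n : ℕ, 1 ≤ n →
        |(P μ₁ {ω | Z n ω = 0}).toReal - (P μ₂ {ω | Z n ω = 0}).toReal| ≤ ε := by
  intro μ₁ hμ₁ hm ε hε
  obtain ⟨δ, hδ, hcore⟩ := GWAux.core μ₁ (ne_of_lt hμ₁) hm hε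
  refine ⟨δ, hδ, ?_⟩
  intro μ₂ _ hd n _
  have e1 : (P μ₁ {ω | Z n ω = 0}).toReal = (GWAux.fR μ₁)^[n] 0 := by
    rw [GWAux.GW_extinct (hP μ₁) n]
    exact (GWAux.iter_bridge μ₁ n).1
  have e2 : (P μ₂ {ω | Z n ω = 0}).toReal = (GWAux.fR μ₂)^[n] 0 := by
    rw [GWAux.GW_extinct (hP μ₂) n]
    exact (GWAux.iter_bridge μ₂ n).1
  rw [e1, e2]
  exact hcore μ₂ hd n
end
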